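/- arXiv:1511.00948 — 10 statements merged into one kernel-verified Lean document; each statement's English description precedes it below -/
import Mathlib

section
/- If A, B ⊆ ℕ, m ∈ ℕ with m ∉ (A−B) ∪ (B−A) and additionally m ∉ (A−A) ∪ (B−B), and A₁ = A ∪ (m+B), B₁ = B ∪ (m+A), then A₁ ∩ B₁ = (A∩B) ∪ (m + (A∩B)), and the sets A∪B and m+(A∪B) are disjoint. -/
/-- Representation function: number of unordered representations of `n`
as `s' + s''` with `s' < s''`, both in `S`. -/
noncomputable def R (S : Set ℕ) (n : ℕ) : ℕ :=
  {p : ℕ × ℕ | p.1 ∈ S ∧ p.2 ∈ S ∧ p.1 < p.2 ∧ p.1 + p.2 = n}.ncard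

/-- Translate of a set: `m + S`. -/
def tr (m : ℕ) (S : Set ℕ) : Set ℕ := (m + ·) '' S


theorem stmt_3 (A B : Set ℕ) (m : ℕ)
    (hm : ∀ a ∈ A, ∀ b ∈ B, a ≠ b + m ∧ b ≠ a + m)
    (hmA : ∀ a ∈ A, ∀ a' ∈ A, a ≠ a' + m)
    (hmB : ∀ b ∈ B, ∀ b' ∈ B, b ≠ b' + m) :
    (A ∪ tr m B) ∩ (B ∪ tr m A) = (A ∩ B) ∪ tr m (A ∩ B) ∧
      Disjoint (A ∪ B) (tr m (A ∪ B)) := by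
  constructor
  · ext x
    simp only [tr, Set.mem_inter_iff, Set.mem_union, Set.mem_image]
    constructor
    · rintro ⟨hA | ⟨b, hb, rfl⟩, h2⟩
      · rcases h2 with hB | ⟨a, ha, rfl⟩
        · exact Or.inl ⟨hA, hB⟩
        · exact absurd (by omega : m + a = a + m) (hmA _ hA _ ha)
      · rcases h2 with hB | ⟨a, ha, hax⟩
        · exact absurd (by omega : m + b = b + m) (hmB _ hB _ hb)
        · have : a = b := by omega
          subst this
          exact Or.inr ⟨a, ⟨ha, hb⟩, rfl⟩
    · rintro (⟨hA, hB⟩ | ⟨y, ⟨hA, hB⟩, rfl⟩)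
      · exact ⟨Or.inl hA, Or.inl hB⟩
      · exact ⟨Or.inr ⟨y, hB, rfl⟩, Or.inr ⟨y, hA, rfl⟩⟩
  · rw [Set.disjoint_left]
    rintro x (hA | hB) ⟨y, (hyA | hyB), hxy⟩ <;>
      have hxy' : m + y = x := hxy
    · exact hmA _ hA _ hyA (by omega)
    · exact (hm _ hA _ hyB).1 (by omega)
    · exact (hm _ hyA _ hB).2 (by omega)
    · exact hmB _ hB _ hyB (by omega)
end

section
/- Let A₀ = {0}, B₀ = {1}, and m_i = 2^{i+1} for i ≥ 0. Define A_{i+1} = A_i ∪ (m_i + B_i) and B_{i+1} = B_i ∪ (m_i + A_i), and let A = ⋃_i A_i, B = ⋃_i B_i. Then for every i, the sets A_i and B_i partition the interval [0, 2^{i+1}−1]; consequently A and B partition ℕ and R_A = R_B. -/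
/-- Iterated construction: `A_{i+1} = A_i ∪ (m_i + B_i)`, `B_{i+1} = B_i ∪ (m_i + A_i)`. -/
def AB (A0 B0 : Set ℕ) (m : ℕ → ℕ) : ℕ → Set ℕ × Set ℕ
  | 0 => (A0, B0)
  | i + 1 => ((AB A0 B0 m i).1 ∪ tr (m i) (AB A0 B0 m i).2,
              (AB A0 B0 m i).2 ∪ tr (m i) (AB A0 B0 m i).1)


namespace Nat

theorem xor_add_two_mul_and (a b : ℕ) : (a ^^^ b) + 2 * (a &&& b) = a + b := by
  induction a using Nat.binaryRec generalizing b with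
  | zero => simp
  | bit x a ih =>
    induction b using Nat.binaryRec with
    | zero => simp
    | bit y b _ =>
      rw [xor_bit, land_bit]
      have := ih b
      cases x <;> cases y <;> simp [Nat.bit_val] <;> omega

theorem two_pow_xor_eq_add {k b : ℕ} (hb : b < 2 ^ k) : 2 ^ k ^^^ b = 2 ^ k + b := by
  have hand : 2 ^ k &&& b = 0 := by simp [two_pow_and, testBit_eq_false_of_lt hb]
  simpa [hand] using xor_add_two_mul_and (2 ^ k) b

theorem xor_two_pow_and_xor_two_pow {a b k : ℕ} (h : a.testBit k ≠ b.testBit k) :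
    (a ^^^ 2 ^ k) &&& (b ^^^ 2 ^ k) = a &&& b := by
  apply eq_of_testBit_eq
  intro j
  simp only [testBit_land, testBit_xor, testBit_two_pow]
  by_cases hj : k = j
  · subst hj
    cases ha : a.testBit k <;> cases hb : b.testBit k <;> simp_all
  · simp [hj]

theorem testBit_eq_of_log2_xor_lt {a b j : ℕ} (hj : (a ^^^ b).log2 < j) :
    a.testBit j = b.testBit j := by
  by_cases hab : a ^^^ b = 0
  · rw [xor_eq_zero_iff.mp hab]
  · simpa [testBit_xor] using testBit_eq_false_of_lt ((log2_lt hab).mp hj)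

theorem testBit_log2_xor_of_lt {a b : ℕ} (h : a < b) :
    a.testBit (a ^^^ b).log2 = false ∧ b.testBit (a ^^^ b).log2 = true := by
  have htop := testBit_log2 (mt xor_eq_zero_iff.mp h.ne)
  rw [testBit_xor] at htop
  cases ha : a.testBit (a ^^^ b).log2
  · simp_all
  · have hb : b.testBit (a ^^^ b).log2 = false := by simp_all
    exact absurd (lt_of_testBit _ hb ha fun j hj => (testBit_eq_of_log2_xor_lt hj).symm) h.not_gt

end Nat

open Nat Set

def thueMorse (n : ℕ) : ZMod 2 := n.bitIndices.length

theorem thueMorse_zero : thueMorse 0 = 0 := by simp [thueMorse]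

theorem thueMorse_bit (x : Bool) (n : ℕ) : thueMorse (bit x n) = thueMorse n + x.toNat := by
  cases x <;> simp [thueMorse]

theorem thueMorse_xor (a b : ℕ) : thueMorse (a ^^^ b) = thueMorse a + thueMorse b := by
  induction a using Nat.binaryRec generalizing b with
  | zero => simp [thueMorse_zero]
  | bit x a ih =>
    induction b using Nat.binaryRec with
    | zero => simp [thueMorse_zero]
    | bit y b _ =>
      rw [xor_bit, thueMorse_bit, thueMorse_bit, thueMorse_bit, ih]
      generalize thueMorse a = u, thueMorse b = v
      cases x <;> cases y <;> decide +revert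

theorem thueMorse_two_pow (k : ℕ) : thueMorse (2 ^ k) = 1 := by simp [thueMorse]

theorem thueMorse_one : thueMorse 1 = 1 := thueMorse_two_pow 0

theorem thueMorse_xor_two_pow (n k : ℕ) : thueMorse (n ^^^ 2 ^ k) = thueMorse n + 1 := by
  rw [thueMorse_xor, thueMorse_two_pow]

theorem thueMorse_two_pow_add {k b : ℕ} (hb : b < 2 ^ k) :
    thueMorse (2 ^ k + b) = thueMorse b + 1 := by
  rw [← two_pow_xor_eq_add hb, Nat.xor_comm, thueMorse_xor_two_pow]

theorem Function.Involutive.ncard_eq_of_mapsTo {α : Type*} {f : α → α} {s t : Set α}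
    (hf : Function.Involutive f) (hst : MapsTo f s t) (hts : MapsTo f t s) : s.ncard = t.ncard :=
  (InvOn.bijOn ⟨fun x _ => hf x, fun x _ => hf x⟩ hst hts).ncard_eq

def flipTopDiffBit (p : ℕ × ℕ) : ℕ × ℕ :=
  (p.2 ^^^ 2 ^ (p.1 ^^^ p.2).log2, p.1 ^^^ 2 ^ (p.1 ^^^ p.2).log2)

theorem flipTopDiffBit_xor (p : ℕ × ℕ) :
    (flipTopDiffBit p).1 ^^^ (flipTopDiffBit p).2 = p.1 ^^^ p.2 := by
  simp only [flipTopDiffBit]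
  ac_nf
  simp

theorem flipTopDiffBit_involutive : Function.Involutive flipTopDiffBit := by
  intro p
  conv_lhs => rw [flipTopDiffBit, flipTopDiffBit_xor]
  simp [flipTopDiffBit]

theorem flipTopDiffBit_lt {p : ℕ × ℕ} (h : p.1 < p.2) :
    (flipTopDiffBit p).1 < (flipTopDiffBit p).2 := by
  obtain ⟨ha, hb⟩ := testBit_log2_xor_of_lt h
  apply lt_of_testBit (p.1 ^^^ p.2).log2
  · simp [flipTopDiffBit, testBit_xor, hb]
  · simp [flipTopDiffBit, testBit_xor, ha]
  · intro j hj
    simp [flipTopDiffBit, testBit_xor, hj.ne, testBit_eq_of_log2_xor_lt hj]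

theorem flipTopDiffBit_add {p : ℕ × ℕ} (h : p.1 < p.2) :
    (flipTopDiffBit p).1 + (flipTopDiffBit p).2 = p.1 + p.2 := by
  obtain ⟨ha, hb⟩ := testBit_log2_xor_of_lt h
  rw [← xor_add_two_mul_and, ← xor_add_two_mul_and p.1, flipTopDiffBit_xor, flipTopDiffBit,
    xor_two_pow_and_xor_two_pow (by rw [ha, hb]; decide), Nat.land_comm]

theorem mapsTo_flipTopDiffBit (c : ZMod 2) (n : ℕ) :
    MapsTo flipTopDiffBit
      {p | p.1 ∈ thueMorse ⁻¹' {c} ∧ p.2 ∈ thueMorse ⁻¹' {c} ∧ p.1 < p.2 ∧ p.1 + p.2 = n}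
      {p | p.1 ∈ thueMorse ⁻¹' {c + 1} ∧ p.2 ∈ thueMorse ⁻¹' {c + 1} ∧ p.1 < p.2 ∧
        p.1 + p.2 = n} := by
  rintro p ⟨h1, h2, hlt, hsum⟩
  simp only [mem_preimage, mem_singleton_iff] at h1 h2
  refine ⟨?_, ?_, flipTopDiffBit_lt hlt, (flipTopDiffBit_add hlt).trans hsum⟩
  · simp [flipTopDiffBit, thueMorse_xor_two_pow, h2]
  · simp [flipTopDiffBit, thueMorse_xor_two_pow, h1]

theorem R_thueMorse_preimage_zero_eq_one : R (thueMorse ⁻¹' {0}) = R (thueMorse ⁻¹' {1}) := by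
  funext n
  exact flipTopDiffBit_involutive.ncard_eq_of_mapsTo (mapsTo_flipTopDiffBit 0 n)
    (mapsTo_flipTopDiffBit 1 n)

theorem Iio_two_pow_succ_inter_thueMorse_preimage (k : ℕ) (c : ZMod 2) :
    Iio (2 ^ (k + 1)) ∩ thueMorse ⁻¹' {c} =
      Iio (2 ^ k) ∩ thueMorse ⁻¹' {c} ∪ tr (2 ^ k) (Iio (2 ^ k) ∩ thueMorse ⁻¹' {c + 1}) := by
  ext n
  simp only [tr, mem_union, mem_inter_iff, mem_Iio, mem_preimage, mem_singleton_iff, mem_image,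
    pow_succ]
  constructor
  · rintro ⟨hn, hc⟩
    by_cases hlt : n < 2 ^ k
    · exact Or.inl ⟨hlt, hc⟩
    · obtain ⟨b, rfl⟩ := exists_add_of_le (not_lt.mp hlt)
      have hb : b < 2 ^ k := by omega
      rw [thueMorse_two_pow_add hb] at hc
      exact Or.inr ⟨b, ⟨hb, by grind⟩, rfl⟩
  · rintro (⟨hn, hc⟩ | ⟨b, ⟨hb, hc⟩, rfl⟩)
    · exact ⟨by omega, hc⟩
    · exact ⟨by omega, by rw [thueMorse_two_pow_add hb, hc]; grind⟩

theorem Iio_two_inter_thueMorse_preimage_zero : Iio 2 ∩ thueMorse ⁻¹' {0} = {0} := by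
  ext n
  constructor
  · rintro ⟨hn : n < 2, hc⟩
    interval_cases n <;> simp_all [thueMorse_one]
  · rintro rfl
    exact ⟨by norm_num, thueMorse_zero⟩

theorem Iio_two_inter_thueMorse_preimage_one : Iio 2 ∩ thueMorse ⁻¹' {1} = {1} := by
  ext n
  constructor
  · rintro ⟨hn : n < 2, hc⟩
    interval_cases n <;> simp_all [thueMorse_zero]
  · rintro rfl
    exact ⟨by norm_num, thueMorse_one⟩

theorem AB_eq_Iio_inter_thueMorse_preimage (i : ℕ) :
    AB {0} {1} (fun i => 2 ^ (i + 1)) i =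
      (Iio (2 ^ (i + 1)) ∩ thueMorse ⁻¹' {0}, Iio (2 ^ (i + 1)) ∩ thueMorse ⁻¹' {1}) := by
  induction i with
  | zero =>
    rw [zero_add, pow_one, Iio_two_inter_thueMorse_preimage_zero,
      Iio_two_inter_thueMorse_preimage_one]
    rfl
  | succ i ih =>
    rw [AB, ih, Iio_two_pow_succ_inter_thueMorse_preimage (i + 1) 0,
      Iio_two_pow_succ_inter_thueMorse_preimage (i + 1) 1, zero_add]
    rfl

theorem iUnion_Iio_two_pow_succ_inter (s : Set ℕ) : ⋃ i, Iio (2 ^ (i + 1)) ∩ s = s := by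
  rw [← iUnion_inter, inter_eq_right]
  exact fun n _ => mem_iUnion.mpr ⟨n, (Nat.lt_two_pow_self).trans (Nat.pow_lt_pow_succ one_lt_two)⟩

theorem preimage_zero_union_preimage_one {α : Type*} (f : α → ZMod 2) :
    f ⁻¹' {0} ∪ f ⁻¹' {1} = univ := by
  ext x
  simp only [mem_union, mem_preimage, mem_singleton_iff, mem_univ, iff_true]
  generalize f x = c
  decide +revert

theorem preimage_zero_inter_preimage_one {α : Type*} (f : α → ZMod 2) :
    f ⁻¹' {0} ∩ f ⁻¹' {1} = ∅ := by
  rw [← preimage_inter]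
  simp

theorem stmt_7 :
    (∀ i, (AB {0} {1} (fun i => 2 ^ (i + 1)) i).1 ∪ (AB {0} {1} (fun i => 2 ^ (i + 1)) i).2
            = Set.Iio (2 ^ (i + 1)) ∧
          (AB {0} {1} (fun i => 2 ^ (i + 1)) i).1 ∩ (AB {0} {1} (fun i => 2 ^ (i + 1)) i).2
            = ∅) ∧
    (⋃ i, (AB {0} {1} (fun i => 2 ^ (i + 1)) i).1) ∪
        (⋃ i, (AB {0} {1} (fun i => 2 ^ (i + 1)) i).2) = Set.univ ∧
    (⋃ i, (AB {0} {1} (fun i => 2 ^ (i + 1)) i).1) ∩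
        (⋃ i, (AB {0} {1} (fun i => 2 ^ (i + 1)) i).2) = ∅ ∧
    R (⋃ i, (AB {0} {1} (fun i => 2 ^ (i + 1)) i).1)
      = R (⋃ i, (AB {0} {1} (fun i => 2 ^ (i + 1)) i).2) := by
  simp only [AB_eq_Iio_inter_thueMorse_preimage, iUnion_Iio_two_pow_succ_inter]
  refine ⟨fun i => ⟨?_, ?_⟩, preimage_zero_union_preimage_one thueMorse,
    preimage_zero_inter_preimage_one thueMorse, R_thueMorse_preimage_zero_eq_one⟩
  · rw [← inter_union_distrib_left, preimage_zero_union_preimage_one, inter_univ]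
  · rw [inter_inter_inter_comm, inter_self, preimage_zero_inter_preimage_one, inter_empty]
end

section
/- In the Dombi construction (A₀={0}, B₀={1}, m_i = 2^{i+1}, A_{i+1} = A_i ∪ (m_i+B_i), B_{i+1} = B_i ∪ (m_i+A_i), A = ⋃A_i, B = ⋃B_i), the set A consists exactly of the nonnegative integers whose binary representation has an even number of ones, and B of those with an odd number of ones. -/
/-!
Write `s n` for the binary digit sum of `n`. For `b < 2 ^ k`, the binary digits of `2 ^ k + b` are
those of `b`, then zeros, then a single one, so `s (2 ^ k + b) = s b + 1`. Hence the numbers below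
`2 ^ (k + 1)` with `s` even are those below `2 ^ k` with `s` even together with `2 ^ k` plus those
below `2 ^ k` with `s` odd. This is the recursion `A_{i+1} = A_i ∪ (2 ^ (i + 1) + B_i)`, so by
induction `A_i` and `B_i` are the numbers below `2 ^ (i + 1)` with `s` even, respectively odd.
-/

theorem Nat.digits_sum_add_base_pow_mul {b k n : ℕ} (hb : 1 < b) (hn : n < b ^ k) (m : ℕ) :
    (b.digits (n + b ^ k * m)).sum = (b.digits n).sum + (b.digits m).sum := by
  rcases m.eq_zero_or_pos with rfl | hm
  · simp
  have hlen : (b.digits n).length + (k - (b.digits n).length) = k :=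
    Nat.add_sub_cancel' ((Nat.digits_length_le_iff hb n).2 hn)
  rw [← hlen, ← Nat.digits_append_zeroes_append_digits hb hm]
  simp

theorem Nat.digits_sum_two_pow_add {k n : ℕ} (hn : n < 2 ^ k) :
    (Nat.digits 2 (2 ^ k + n)).sum = (Nat.digits 2 n).sum + 1 := by
  simpa [add_comm] using Nat.digits_sum_add_base_pow_mul (m := 1) one_lt_two hn

theorem mem_tr_iff {m x : ℕ} {S : Set ℕ} : x ∈ tr m S ↔ m ≤ x ∧ x - m ∈ S := by
  constructor
  · rintro ⟨y, hy, rfl⟩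
    simpa using hy
  · rintro ⟨hmx, hx⟩
    exact ⟨x - m, hx, Nat.add_sub_cancel' hmx⟩

theorem setOf_lt_two_pow_succ_and_digits_sum (p : ℕ → Prop) (k : ℕ) :
    {n | n < 2 ^ (k + 1) ∧ p (Nat.digits 2 n).sum}
      = {n | n < 2 ^ k ∧ p (Nat.digits 2 n).sum}
        ∪ tr (2 ^ k) {n | n < 2 ^ k ∧ p ((Nat.digits 2 n).sum + 1)} := by
  ext n
  simp only [Set.mem_union, mem_tr_iff, Set.mem_ofPred_eq, pow_succ]
  by_cases hn : n < 2 ^ k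
  · simp [hn, show n < 2 ^ k * 2 by omega, show ¬ 2 ^ k ≤ n by omega]
  · obtain ⟨b, rfl⟩ := Nat.exists_eq_add_of_le (not_lt.1 hn)
    rw [Nat.add_sub_cancel_left]
    by_cases hb : b < 2 ^ k
    · rw [Nat.digits_sum_two_pow_add hb]
      simp [hn, hb, show 2 ^ k + b < 2 ^ k * 2 by omega]
    · simp [hn, hb, show ¬ 2 ^ k + b < 2 ^ k * 2 by omega]

theorem AB_dombi (i : ℕ) :
    AB {0} {1} (fun i => 2 ^ (i + 1)) i
      = ({n | n < 2 ^ (i + 1) ∧ Even (Nat.digits 2 n).sum},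
         {n | n < 2 ^ (i + 1) ∧ Odd (Nat.digits 2 n).sum}) := by
  induction i with
  | zero =>
    refine Prod.ext (Set.ext fun n => ?_) (Set.ext fun n => ?_) <;>
      simp only [AB, Set.mem_singleton_iff, Set.mem_ofPred_eq, zero_add, pow_one] <;>
      refine ⟨by rintro rfl; simp, fun ⟨hn, h⟩ => ?_⟩ <;> interval_cases n <;> simp_all
  | succ i ih =>
    rw [AB, ih, setOf_lt_two_pow_succ_and_digits_sum _ (i + 1),
      setOf_lt_two_pow_succ_and_digits_sum _ (i + 1)]
    simp only [Nat.even_add_one, Nat.not_even_iff_odd, Nat.odd_add_one, Nat.not_odd_iff_even]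

theorem iUnion_setOf_lt_two_pow_succ_and (p : ℕ → Prop) :
    ⋃ i, {n | n < 2 ^ (i + 1) ∧ p n} = {n | p n} := by
  ext n
  simp only [Set.mem_iUnion, Set.mem_ofPred_eq]
  exact ⟨fun ⟨_, _, hn⟩ => hn, fun hn => ⟨n, n.lt_two_pow_self.trans (by simp [pow_succ]), hn⟩⟩

theorem stmt_8 :
    (⋃ i, (AB {0} {1} (fun i => 2 ^ (i + 1)) i).1)
        = {n : ℕ | Even ((Nat.digits 2 n).sum)} ∧
    (⋃ i, (AB {0} {1} (fun i => 2 ^ (i + 1)) i).2)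
        = {n : ℕ | Odd ((Nat.digits 2 n).sum)} := by
  simp only [AB_dombi, iUnion_setOf_lt_two_pow_succ_and, and_self]
end

section
/- Suppose A₀, B₀ ⊆ ℕ satisfy R_{A₀} = R_{B₀}, and (m_i)_{i≥0} is a sequence of nonnegative integers. Define A_{i+1} = A_i ∪ (m_i + B_i), B_{i+1} = B_i ∪ (m_i + A_i), and A = ⋃_i A_i, B = ⋃_i B_i. If for every i we have m_i ∉ (A_i − B_i) ∪ (B_i − A_i), and additionally the sequence grows fast enough that every integer n can only receive representations from finitely many stages (e.g. m_i → ∞ with A_i∪B_i ⊆ [0, m_i]), then R_A = R_B. -/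
namespace Stmt9Aux

/-- The set of representations. -/
def P (S : Set ℕ) (n : ℕ) : Set (ℕ × ℕ) :=
  {p : ℕ × ℕ | p.1 ∈ S ∧ p.2 ∈ S ∧ p.1 < p.2 ∧ p.1 + p.2 = n}

lemma R_eq (S : Set ℕ) (n : ℕ) : R S n = (P S n).ncard := rfl

lemma mem_tr {m x : ℕ} {S : Set ℕ} : x ∈ tr m S ↔ ∃ b ∈ S, x = m + b := by
  simp [tr, eq_comm]

lemma P_subset (S : Set ℕ) (n : ℕ) : P S n ⊆ Set.Iic n ×ˢ Set.Iic n := by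
  rintro ⟨x, y⟩ ⟨_, _, _, h⟩
  simp only [Set.mem_prod, Set.mem_Iic]
  omega

lemma P_finite (S : Set ℕ) (n : ℕ) : (P S n).Finite :=
  Set.Finite.subset (((Set.finite_Iic n).prod (Set.finite_Iic n))) (P_subset S n)

/-- Cross representations. -/
def Cr (A C : Set ℕ) (n : ℕ) : Set (ℕ × ℕ) :=
  {p : ℕ × ℕ | ((p.1 ∈ A ∧ p.2 ∈ C) ∨ (p.1 ∈ C ∧ p.2 ∈ A)) ∧ p.1 < p.2 ∧ p.1 + p.2 = n}

lemma Cr_subset (A C : Set ℕ) (n : ℕ) : Cr A C n ⊆ P (A ∪ C) n := by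
  rintro ⟨x, y⟩ ⟨h1, h2, h3⟩
  refine ⟨?_, ?_, h2, h3⟩ <;> rcases h1 with ⟨ha, hb⟩ | ⟨ha, hb⟩ <;>
    simp [Set.mem_union, ha, hb]

lemma Cr_finite (A C : Set ℕ) (n : ℕ) : (Cr A C n).Finite :=
  (P_finite _ _).subset (Cr_subset A C n)

lemma P_union (A C : Set ℕ) (n : ℕ) :
    P (A ∪ C) n = (P A n ∪ P C n) ∪ Cr A C n := by
  ext ⟨x, y⟩
  simp only [P, Cr, Set.mem_union, Set.mem_setOf_eq]
  tauto

lemma R_union (A C : Set ℕ) (n : ℕ) (hd : ∀ a ∈ A, a ∉ C) :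
    R (A ∪ C) n = R A n + R C n + (Cr A C n).ncard := by
  rw [R_eq, R_eq, R_eq, P_union]
  have hdis1 : Disjoint (P A n) (P C n) := by
    rw [Set.disjoint_left]
    rintro ⟨x, y⟩ ⟨hx, _, _, _⟩ ⟨hx', _, _, _⟩
    exact hd x hx hx'
  have hdis2 : Disjoint (P A n ∪ P C n) (Cr A C n) := by
    rw [Set.disjoint_left]
    rintro ⟨x, y⟩ hx ⟨hc, _, _⟩
    rcases hx with ⟨hx1, hy1, _, _⟩ | ⟨hx1, hy1, _, _⟩ <;>
      rcases hc with ⟨ha, hb⟩ | ⟨ha, hb⟩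
    · exact hd y hy1 hb
    · exact hd x hx1 ha
    · exact hd x ha hx1
    · exact hd y hb hy1
  rw [Set.ncard_union_eq hdis2 ((P_finite _ _).union (P_finite _ _)) (Cr_finite _ _ _),
    Set.ncard_union_eq hdis1 (P_finite _ _) (P_finite _ _)]

lemma R_tr (m : ℕ) (S : Set ℕ) (n : ℕ) :
    R (tr m S) n = if 2 * m ≤ n then R S (n - 2 * m) else 0 := by
  split_ifs with h
  · rw [R_eq, R_eq]
    have himg : P (tr m S) n = (fun p : ℕ × ℕ => (m + p.1, m + p.2)) '' P S (n - 2 * m) := by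
      ext ⟨x, y⟩
      simp only [P, tr, Set.mem_setOf_eq, Set.mem_image, Prod.mk.injEq, Prod.exists]
      constructor
      · rintro ⟨h1, h2, hlt, hs⟩
        obtain ⟨a, ha, rfl⟩ := h1
        obtain ⟨b, hb, rfl⟩ := h2
        exact ⟨a, b, ⟨ha, hb, by omega, by omega⟩, rfl, rfl⟩
      · rintro ⟨a, b, ⟨ha, hb, hlt, hs⟩, rfl, rfl⟩
        exact ⟨mem_tr.mpr ⟨a, ha, rfl⟩, mem_tr.mpr ⟨b, hb, rfl⟩, by omega, by omega⟩
    rw [himg, Set.ncard_image_of_injective]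
    intro ⟨a, b⟩ ⟨c, d⟩ hpq
    simp only [Prod.mk.injEq] at hpq
    ext <;> omega
  · rw [R_eq]
    convert Set.ncard_empty (ℕ × ℕ)
    ext ⟨x, y⟩
    simp only [P, tr, Set.mem_setOf_eq, Set.mem_empty_iff_false, iff_false]
    rintro ⟨h1, h2, _, hs⟩
    simp only [Set.mem_image] at h1 h2
    obtain ⟨a, _, rfl⟩ := h1
    obtain ⟨b, _, rfl⟩ := h2
    omega

/-- Unordered cross pairs biject with ordered A×B pairs. -/
def Q (A B : Set ℕ) (m n : ℕ) : Set (ℕ × ℕ) :=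
  {q : ℕ × ℕ | q.1 ∈ A ∧ q.2 ∈ B ∧ q.1 + q.2 + m = n}

lemma Cr_ncard (A B : Set ℕ) (m n : ℕ)
    (hd : ∀ a ∈ A, ∀ b ∈ B, a ≠ b + m) :
    (Cr A (tr m B) n).ncard = (Q A B m n).ncard := by
  classical
  set f : ℕ × ℕ → ℕ × ℕ := fun p => if p.1 ∈ A then (p.1, p.2 - m) else (p.2, p.1 - m) with hf
  have hAtr : ∀ x ∈ A, x ∉ tr m B := by
    intro x hx hxt
    obtain ⟨b, hb, rfl⟩ := mem_tr.mp hxt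
    exact hd _ hx _ hb (by omega)
  have himg : f '' Cr A (tr m B) n = Q A B m n := by
    ext ⟨u, v⟩
    simp only [Set.mem_image, Q, Set.mem_setOf_eq, Prod.exists]
    constructor
    · rintro ⟨x, y, ⟨hc, hlt, hs⟩, hfe⟩
      rcases hc with ⟨hx, hy⟩ | ⟨hx, hy⟩ <;>
        [obtain ⟨b, hb, rfl⟩ := mem_tr.mp hy; obtain ⟨b, hb, rfl⟩ := mem_tr.mp hx]
      · simp only [hf, if_pos hx, Prod.mk.injEq] at hfe
        obtain ⟨rfl, rfl⟩ := hfe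
        exact ⟨hx, by simpa using hb, by omega⟩
      · have hnx : (m + b) ∉ A := fun h => hd _ h _ hb (by omega)
        simp only [hf, if_neg hnx, Prod.mk.injEq] at hfe
        obtain ⟨rfl, rfl⟩ := hfe
        exact ⟨hy, by simpa using hb, by omega⟩
    · rintro ⟨hu, hv, hs⟩
      have hne : u ≠ m + v := fun h => hd _ hu _ hv (by omega)
      rcases lt_or_gt_of_ne hne with hlt | hlt
      · refine ⟨u, m + v, ⟨Or.inl ⟨hu, mem_tr.mpr ⟨v, hv, rfl⟩⟩, hlt, by omega⟩, ?_⟩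
        simp [hf, if_pos hu]
      · have hnA : (m + v) ∉ A := fun h => hd _ h _ hv (by omega)
        refine ⟨m + v, u, ⟨Or.inr ⟨mem_tr.mpr ⟨v, hv, rfl⟩, hu⟩, hlt, by omega⟩, ?_⟩
        simp [hf, if_neg hnA]
  have hinj : Set.InjOn f (Cr A (tr m B) n) := by
    rintro ⟨x, y⟩ ⟨hc, hlt, hs⟩ ⟨x', y'⟩ ⟨hc', hlt', hs'⟩ hfe
    have key : ∀ z w : ℕ × ℕ, ((z.1 ∈ A ∧ z.2 ∈ tr m B) ∨ (z.1 ∈ tr m B ∧ z.2 ∈ A)) →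
        (z.1 ∈ A → f z = (z.1, z.2 - m) ∧ ∃ b ∈ B, z.2 = m + b) ∧
        (z.1 ∉ A → f z = (z.2, z.1 - m) ∧ ∃ b ∈ B, z.1 = m + b) := by
      rintro z w hz
      constructor
      · intro hzA
        refine ⟨by simp [hf, if_pos hzA], ?_⟩
        rcases hz with ⟨_, hzt⟩ | ⟨hzt, _⟩
        · obtain ⟨b, hb, he⟩ := mem_tr.mp hzt
          exact ⟨b, hb, he⟩
        · obtain ⟨b, hb, he⟩ := mem_tr.mp hzt
          exact absurd hzA (he ▸ fun h => hd _ h _ hb (by omega))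
      · intro hzA
        refine ⟨by simp [hf, if_neg hzA], ?_⟩
        rcases hz with ⟨hzA', _⟩ | ⟨hzt, _⟩
        · exact absurd hzA' hzA
        · obtain ⟨b, hb, he⟩ := mem_tr.mp hzt
          exact ⟨b, hb, he⟩
    by_cases hx : x ∈ A <;> by_cases hx' : x' ∈ A
    · obtain ⟨he1, b, hb, rfl⟩ := ((key (x, y) 0 hc).1 hx)
      obtain ⟨he2, b', hb', rfl⟩ := ((key (x', y') 0 hc').1 hx')
      rw [he1, he2] at hfe
      simp only [Prod.mk.injEq] at hfe ⊢
      omega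
    · obtain ⟨he1, b, hb, rfl⟩ := ((key (x, y) 0 hc).1 hx)
      obtain ⟨he2, b', hb', rfl⟩ := ((key (x', y') 0 hc').2 hx')
      rw [he1, he2] at hfe
      simp only [Prod.mk.injEq] at hfe
      omega
    · obtain ⟨he1, b, hb, rfl⟩ := ((key (x, y) 0 hc).2 hx)
      obtain ⟨he2, b', hb', rfl⟩ := ((key (x', y') 0 hc').1 hx')
      rw [he1, he2] at hfe
      simp only [Prod.mk.injEq] at hfe
      omega
    · obtain ⟨he1, b, hb, rfl⟩ := ((key (x, y) 0 hc).2 hx)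
      obtain ⟨he2, b', hb', rfl⟩ := ((key (x', y') 0 hc').2 hx')
      rw [he1, he2] at hfe
      simp only [Prod.mk.injEq] at hfe ⊢
      omega
  rw [← himg, Set.ncard_image_of_injOn hinj]

lemma Q_swap (A B : Set ℕ) (m n : ℕ) :
    (Q A B m n).ncard = (Q B A m n).ncard := by
  have : Q B A m n = Prod.swap '' Q A B m n := by
    ext ⟨u, v⟩
    simp only [Q, Set.mem_setOf_eq, Set.mem_image, Prod.exists, Prod.swap_prod_mk,
      Prod.mk.injEq]
    constructor
    · rintro ⟨hu, hv, hs⟩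
      exact ⟨v, u, ⟨hv, hu, by omega⟩, rfl, rfl⟩
    · rintro ⟨a, b, ⟨ha, hb, hs⟩, rfl, rfl⟩
      exact ⟨hb, ha, by omega⟩
  rw [this, Set.ncard_image_of_injective _ Prod.swap_injective]

end Stmt9Aux

open Stmt9Aux in
theorem stmt_9 (A0 B0 : Set ℕ) (m : ℕ → ℕ)
    (h0 : R A0 = R B0)
    (hm : ∀ i, ∀ a ∈ (AB A0 B0 m i).1, ∀ b ∈ (AB A0 B0 m i).2,
      a ≠ b + m i ∧ b ≠ a + m i)
    (hgrow : ∀ i, (AB A0 B0 m i).1 ∪ (AB A0 B0 m i).2 ⊆ Set.Iic (m i))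
    (htend : Filter.Tendsto m Filter.atTop Filter.atTop) :
    R (⋃ i, (AB A0 B0 m i).1) = R (⋃ i, (AB A0 B0 m i).2) := by
  -- Stage-wise equality of representation functions
  have stage : ∀ i, R (AB A0 B0 m i).1 = R (AB A0 B0 m i).2 := by
    intro i
    induction i with
    | zero => exact h0
    | succ i ih =>
      funext n
      set A := (AB A0 B0 m i).1
      set B := (AB A0 B0 m i).2
      have hdAB : ∀ a ∈ A, ∀ b ∈ B, a ≠ b + m i := fun a ha b hb => (hm i a ha b hb).1
      have hdBA : ∀ b ∈ B, ∀ a ∈ A, b ≠ a + m i := fun b hb a ha => (hm i a ha b hb).2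
      have hd1 : ∀ a ∈ A, a ∉ tr (m i) B := by
        intro a ha hat
        obtain ⟨b, hb, rfl⟩ := mem_tr.mp hat
        exact hdAB _ ha _ hb (by omega)
      have hd2 : ∀ b ∈ B, b ∉ tr (m i) A := by
        intro b hb hbt
        obtain ⟨a, ha, rfl⟩ := mem_tr.mp hbt
        exact hdBA _ hb _ ha (by omega)
      show R (A ∪ tr (m i) B) n = R (B ∪ tr (m i) A) n
      rw [R_union A (tr (m i) B) n hd1, R_union B (tr (m i) A) n hd2,
        Cr_ncard A B (m i) n hdAB, Cr_ncard B A (m i) n hdBA,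
        Q_swap A B (m i) n, R_tr, R_tr, ih]
  -- Monotonicity of the stages
  have mono : ∀ i j, i ≤ j →
      (AB A0 B0 m i).1 ⊆ (AB A0 B0 m j).1 ∧ (AB A0 B0 m i).2 ⊆ (AB A0 B0 m j).2 := by
    intro i j hij
    induction j with
    | zero =>
      have : i = 0 := by omega
      subst this; exact ⟨subset_rfl, subset_rfl⟩
    | succ j ihj =>
      rcases Nat.lt_or_ge i (j + 1) with h | h
      · have := ihj (by omega)
        exact ⟨this.1.trans (Set.subset_union_left), this.2.trans (Set.subset_union_left)⟩
      · have : i = j + 1 := by omega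
        subst this
        exact ⟨subset_rfl, subset_rfl⟩
  -- Stabilization
  have stab : ∀ n i, (∀ j, i ≤ j → n < m j) →
      P (⋃ k, (AB A0 B0 m k).1) n = P (AB A0 B0 m i).1 n ∧
      P (⋃ k, (AB A0 B0 m k).2) n = P (AB A0 B0 m i).2 n := by
    intro n i hi
    have elem : ∀ j, (∀ x ∈ (AB A0 B0 m j).1, x ≤ n → x ∈ (AB A0 B0 m i).1) ∧
        (∀ x ∈ (AB A0 B0 m j).2, x ≤ n → x ∈ (AB A0 B0 m i).2) := by
      intro j
      induction j with
      | zero => exact ⟨fun x hx _ => (mono 0 i (Nat.zero_le i)).1 hx,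
          fun x hx _ => (mono 0 i (Nat.zero_le i)).2 hx⟩
      | succ j ihj =>
        rcases Nat.lt_or_ge i (j + 1) with h | h
        · have hj : i ≤ j := by omega
          constructor
          · rintro x (hx | hxt) hxn
            · exact ihj.1 x hx hxn
            · obtain ⟨b, hb, rfl⟩ := mem_tr.mp hxt
              exact absurd hxn (by have := hi j hj; omega)
          · rintro x (hx | hxt) hxn
            · exact ihj.2 x hx hxn
            · obtain ⟨a, ha, rfl⟩ := mem_tr.mp hxt
              exact absurd hxn (by have := hi j hj; omega)
        · exact ⟨fun x hx _ => (mono (j + 1) i h).1 hx,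
            fun x hx _ => (mono (j + 1) i h).2 hx⟩
    constructor
    · ext ⟨x, y⟩
      simp only [P, Set.mem_setOf_eq, Set.mem_iUnion]
      constructor
      · rintro ⟨⟨k1, hx⟩, ⟨k2, hy⟩, hlt, hs⟩
        exact ⟨(elem k1).1 x hx (by omega), (elem k2).1 y hy (by omega), hlt, hs⟩
      · rintro ⟨hx, hy, hlt, hs⟩
        exact ⟨⟨i, hx⟩, ⟨i, hy⟩, hlt, hs⟩
    · ext ⟨x, y⟩
      simp only [P, Set.mem_setOf_eq, Set.mem_iUnion]
      constructor
      · rintro ⟨⟨k1, hx⟩, ⟨k2, hy⟩, hlt, hs⟩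
        exact ⟨(elem k1).2 x hx (by omega), (elem k2).2 y hy (by omega), hlt, hs⟩
      · rintro ⟨hx, hy, hlt, hs⟩
        exact ⟨⟨i, hx⟩, ⟨i, hy⟩, hlt, hs⟩
  funext n
  obtain ⟨i, hi⟩ := (Filter.eventually_atTop).mp (htend.eventually_ge_atTop (n + 1))
  have hi' : ∀ j, i ≤ j → n < m j := fun j hj => by have := hi j hj; omega
  obtain ⟨e1, e2⟩ := stab n i hi'
  rw [R_eq, R_eq, e1, e2, ← R_eq, ← R_eq, stage i]
end

section
/- In the construction with parameter l (A₀={0}, B₀={1}, m_i as in the paper: m_i = 2^{i+1} for i ≤ 2l−2, m_{2l−1} = 2^{2l}−1, m_i = 2^{i+1} − 2^{i−2l} for i ≥ 2l), the sets A_{2l−1} and B_{2l−1} partition the interval [0, m_{2l−1}], and A_{2l−1} contains both 0 and m_{2l−1} = 2^{2l}−1. -/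
/-- The sequence `m_i` from the paper, with parameter `l`. -/
def mseq (l i : ℕ) : ℕ :=
  if i ≤ 2*l - 2 then 2^(i+1)
  else if i = 2*l - 1 then 2^(2*l) - 1
  else 2^(i+1) - 2^(i - 2*l)


lemma mem_tr {m n : ℕ} {S : Set ℕ} : n ∈ tr m S ↔ ∃ x ∈ S, m + x = n := by
  simp [tr]

lemma main_inv (l : ℕ) (hl : 1 ≤ l) : ∀ k, k ≤ 2*l - 1 →
    (AB {0} {1} (mseq l) k).1 ∪ (AB {0} {1} (mseq l) k).2 = Set.Iic (2^(k+1) - 1) ∧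
    (AB {0} {1} (mseq l) k).1 ∩ (AB {0} {1} (mseq l) k).2 = ∅ ∧
    0 ∈ (AB {0} {1} (mseq l) k).1 ∧
    ((2^(k+1) - 1 ∈ (AB {0} {1} (mseq l) k).1) ↔ Odd k) := by
  intro k
  induction k with
  | zero =>
    intro _
    refine ⟨?_, ?_, ?_, ?_⟩
    · ext n; simp [AB]; omega
    · ext n; simp [AB]
    · simp [AB]
    · simp [AB, Nat.odd_iff]
  | succ k ih =>
    intro hk
    obtain ⟨hU, hI, h0, htop⟩ := ih (by omega)
    have hm : mseq l k = 2^(k+1) := by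
      have hle : k ≤ 2*l - 2 := by omega
      simp [mseq, hle]
    set A := (AB {0} {1} (mseq l) k).1 with hA
    set B := (AB {0} {1} (mseq l) k).2 with hB
    set M := 2^(k+1) with hM
    have hpow : 1 ≤ M := Nat.one_le_two_pow
    have hpow2 : 2^(k+1+1) = 2 * M := by rw [hM]; ring
    have hUn : ∀ n, (n ∈ A ∨ n ∈ B) ↔ n ≤ M - 1 := by
      intro n
      have : (n ∈ A ∪ B) ↔ n ∈ Set.Iic (M - 1) := by rw [hU]
      simpa using this
    have hIn : ∀ n, ¬ (n ∈ A ∧ n ∈ B) := by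
      intro n hn
      have h : n ∈ A ∩ B := hn
      rw [hI] at h
      exact h
    have hstep1 : (AB {0} {1} (mseq l) (k+1)).1 = A ∪ tr M B := by
      simp [AB, hm, ← hA, ← hB]
    have hstep2 : (AB {0} {1} (mseq l) (k+1)).2 = B ∪ tr M A := by
      simp [AB, hm, ← hA, ← hB]
    refine ⟨?_, ?_, ?_, ?_⟩
    · rw [hstep1, hstep2]
      ext n
      simp only [Set.mem_union, mem_tr, Set.mem_Iic, hpow2]
      constructor
      · rintro ((h | ⟨x, hx, rfl⟩) | (h | ⟨x, hx, rfl⟩))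
        · have := (hUn n).mp (Or.inl h); omega
        · have := (hUn x).mp (Or.inr hx); omega
        · have := (hUn n).mp (Or.inr h); omega
        · have := (hUn x).mp (Or.inl hx); omega
      · intro hn
        by_cases hnM : n ≤ M - 1
        · rcases (hUn n).mpr hnM with h | h
          · exact Or.inl (Or.inl h)
          · exact Or.inr (Or.inl h)
        · have hx : n - M ≤ M - 1 := by omega
          rcases (hUn (n - M)).mpr hx with h | h
          · exact Or.inr (Or.inr ⟨n - M, h, by omega⟩)
          · exact Or.inl (Or.inr ⟨n - M, h, by omega⟩)
    · rw [hstep1, hstep2]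
      ext n
      simp only [Set.mem_inter_iff, Set.mem_union, mem_tr, Set.mem_empty_iff_false, iff_false]
      rintro ⟨h1 | ⟨x, hx, hxe⟩, h2 | ⟨y, hy, hye⟩⟩
      · exact hIn n ⟨h1, h2⟩
      · have := (hUn n).mp (Or.inl h1); omega
      · have := (hUn n).mp (Or.inr h2); omega
      · have : x = y := by omega
        subst this
        exact hIn x ⟨hy, hx⟩
    · rw [hstep1]; exact Or.inl h0
    · rw [hstep1]
      simp only [Set.mem_union, mem_tr]
      have hne : ¬ (2^(k+1+1) - 1 ∈ A) := by
        intro h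
        have := (hUn _).mp (Or.inl h)
        omega
      have hMB : M - 1 ∈ B ↔ ¬ Odd k := by
        constructor
        · intro h ho
          exact hIn (M - 1) ⟨htop.mpr ho, h⟩
        · intro h
          rcases (hUn (M - 1)).mpr le_rfl with hA' | hB'
          · exact absurd (htop.mp hA') h
          · exact hB'
      constructor
      · rintro (h | ⟨x, hx, hxe⟩)
        · exact absurd h hne
        · have hxle := (hUn x).mp (Or.inr hx)
          have : x = M - 1 := by omega
          subst this
          have := hMB.mp hx
          simpa [Nat.odd_add_one] using this
      · intro h
        have : ¬ Odd k := by simpa [Nat.odd_add_one] using h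
        exact Or.inr ⟨M - 1, hMB.mpr this, by omega⟩

theorem stmt_11 (l : ℕ) (hl : 1 ≤ l) :
    (AB {0} {1} (mseq l) (2 * l - 1)).1 ∪ (AB {0} {1} (mseq l) (2 * l - 1)).2
      = Set.Iic (mseq l (2 * l - 1)) ∧
    (AB {0} {1} (mseq l) (2 * l - 1)).1 ∩ (AB {0} {1} (mseq l) (2 * l - 1)).2 = ∅ ∧
    0 ∈ (AB {0} {1} (mseq l) (2 * l - 1)).1 ∧
    2 ^ (2 * l) - 1 ∈ (AB {0} {1} (mseq l) (2 * l - 1)).1 := by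
  obtain ⟨hU, hI, h0, htop⟩ := main_inv l hl (2*l - 1) le_rfl
  have hm : mseq l (2*l - 1) = 2^(2*l) - 1 := by
    have h1 : ¬ (2*l - 1 ≤ 2*l - 2) := by omega
    simp [mseq, h1]
  have he : 2*l - 1 + 1 = 2*l := by omega
  rw [he] at hU htop
  refine ⟨by rw [hU, hm], hI, h0, htop.mpr ?_⟩
  refine ⟨l - 1, by omega⟩
end

section
/- In the construction with parameter l, for every i ≥ 2l: A_i ∪ B_i = [0, m_i − 1] and A_i ∩ B_i = m_{2l−1} + {0, m_{2l}, 2m_{2l}, …, (2^{i−2l}−1)·m_{2l}}, i.e. the intersection is a finite arithmetic progression with first term 2^{2l}−1, common difference 2^{2l+1}−1, and 2^{i−2l} terms. -/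
namespace S13

lemma mem_tr {m x : ℕ} {S : Set ℕ} : x ∈ tr m S ↔ ∃ a ∈ S, m + a = x := by
  simp [tr]

lemma mseq_small {l i : ℕ} (h : i ≤ 2*l - 2) : mseq l i = 2^(i+1) := by
  simp [mseq, h]

lemma mseq_eq {l : ℕ} (hl : 1 ≤ l) : mseq l (2*l - 1) = 2^(2*l) - 1 := by
  have : ¬ (2*l - 1 ≤ 2*l - 2) := by omega
  simp [mseq, this]

lemma mseq_big {l i : ℕ} (hl : 1 ≤ l) (h : 2*l ≤ i) :
    mseq l i = 2^(i+1) - 2^(i - 2*l) := by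
  have h1 : ¬ (i ≤ 2*l - 2) := by omega
  have h2 : ¬ (i = 2*l - 1) := by omega
  simp [mseq, h1, h2]

lemma mseq_pos {l : ℕ} (hl : 1 ≤ l) (i : ℕ) : 0 < mseq l i := by
  rcases le_or_gt i (2*l-2) with h | h
  · rw [mseq_small h]; positivity
  · rcases eq_or_lt_of_le (by omega : 2*l - 1 ≤ i) with h' | h'
    · rw [← h', mseq_eq hl]
      have : (2:ℕ)^1 ≤ 2^(2*l) := Nat.pow_le_pow_right (by norm_num) (by omega)
      omega
    · rw [mseq_big hl (by omega)]
      have : (2:ℕ)^(i - 2*l) < 2^(i+1) := Nat.pow_lt_pow_right (by norm_num) (by omega)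
      omega

lemma mseq_prod {l i : ℕ} (hl : 1 ≤ l) (h : 2*l ≤ i) :
    mseq l i = 2^(i - 2*l) * (2^(2*l+1) - 1) := by
  rw [mseq_big hl h, Nat.mul_sub, mul_one, ← pow_add]
  congr 2
  omega

lemma mseq_double {l i : ℕ} (hl : 1 ≤ l) (h : 2*l ≤ i) :
    mseq l (i+1) = 2 * mseq l i := by
  rw [mseq_prod hl h, mseq_prod hl (by omega), show i+1-2*l = (i-2*l)+1 by omega,
    pow_succ]
  ring

lemma zero_notMem_B {l : ℕ} (hl : 1 ≤ l) (i : ℕ) :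
    0 ∉ (AB {0} {1} (mseq l) i).2 := by
  induction i with
  | zero => simp [AB]
  | succ i ih =>
    simp only [AB, Set.mem_union, mem_tr]
    rintro (h | ⟨a, _, ha⟩)
    · exact ih h
    · have := mseq_pos hl i
      omega

/-- pre-stage invariant for `i ≤ 2l-1` -/
lemma pre {l : ℕ} (hl : 1 ≤ l) : ∀ i, i ≤ 2*l - 1 →
    (AB {0} {1} (mseq l) i).1 ∪ (AB {0} {1} (mseq l) i).2 = Set.Iio (2^(i+1)) ∧
    (AB {0} {1} (mseq l) i).1 ∩ (AB {0} {1} (mseq l) i).2 = ∅ ∧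
    (Odd i → 2^(i+1) - 1 ∈ (AB {0} {1} (mseq l) i).1) ∧
    (Even i → 2^(i+1) - 1 ∈ (AB {0} {1} (mseq l) i).2) := by
  intro i
  induction i with
  | zero =>
    intro _
    refine ⟨?_, ?_, ?_, ?_⟩
    · ext x; simp [AB]; omega
    · ext x; simp [AB]
    · intro h; exact absurd h (by simp)
    · intro _; simp [AB]
  | succ i ih =>
    intro hle
    obtain ⟨hU, hI, hA, hB⟩ := ih (by omega)
    have hm : mseq l i = 2^(i+1) := mseq_small (by omega)
    set A := (AB {0} {1} (mseq l) i).1 with hAdef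
    set B := (AB {0} {1} (mseq l) i).2 with hBdef
    have hAsub : ∀ x ∈ A, x < 2^(i+1) := fun x hx => by
      have : x ∈ A ∪ B := Or.inl hx; rw [hU] at this; exact this
    have hBsub : ∀ x ∈ B, x < 2^(i+1) := fun x hx => by
      have : x ∈ A ∪ B := Or.inr hx; rw [hU] at this; exact this
    have hIe : ∀ x, x ∈ A → x ∈ B → False := fun x h1 h2 => by
      have : x ∈ A ∩ B := ⟨h1, h2⟩; rw [hI] at this; exact this
    have hABsucc : (AB {0} {1} (mseq l) (i+1)).1 = A ∪ tr (mseq l i) B ∧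
        (AB {0} {1} (mseq l) (i+1)).2 = B ∪ tr (mseq l i) A := ⟨rfl, rfl⟩
    have hpow : (2:ℕ)^(i+2) = 2^(i+1) + 2^(i+1) := by rw [pow_succ]; ring
    have hpow1 : (1:ℕ) ≤ 2^(i+1) := Nat.one_le_two_pow
    refine ⟨?_, ?_, ?_, ?_⟩
    · rw [hABsucc.1, hABsucc.2]
      ext x
      simp only [Set.mem_union, mem_tr, Set.mem_Iio]
      constructor
      · rintro ((h|⟨a,ha,rfl⟩)|(h|⟨a,ha,rfl⟩))
        · have := hAsub x h; omega
        · have := hBsub a ha; omega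
        · have := hBsub x h; omega
        · have := hAsub a ha; omega
      · intro hx
        rcases lt_or_ge x (2^(i+1)) with h | h
        · have : x ∈ A ∪ B := by rw [hU]; exact h
          rcases this with h' | h'
          · exact Or.inl (Or.inl h')
          · exact Or.inr (Or.inl h')
        · have : x - 2^(i+1) ∈ A ∪ B := by rw [hU]; simp; omega
          rcases this with h' | h'
          · exact Or.inr (Or.inr ⟨_, h', by omega⟩)
          · exact Or.inl (Or.inr ⟨_, h', by omega⟩)
    · rw [hABsucc.1, hABsucc.2]
      ext x
      simp only [Set.mem_inter_iff, Set.mem_union, mem_tr, Set.mem_empty_iff_false,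
        iff_false]
      rintro ⟨(h1|⟨a,ha,hae⟩), (h2|⟨b,hb,hbe⟩)⟩
      · exact hIe x h1 h2
      · have := hAsub x h1; have := hAsub b hb; omega
      · have := hBsub x h2; have := hBsub a ha; omega
      · have : a = b := by omega
        exact hIe a (this ▸ hb) ha
    · intro hodd
      have hieven : Even i := by
        rcases Nat.even_or_odd i with h | h
        · exact h
        · exact absurd hodd (by simp [Nat.odd_add_one, Nat.odd_iff, Nat.even_iff] at h ⊢; omega)
      rw [hABsucc.1]
      refine Or.inr (mem_tr.2 ⟨2^(i+1) - 1, hB hieven, by omega⟩)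
    · intro heven
      have hiodd : Odd i := by
        rcases Nat.even_or_odd i with h | h
        · exfalso
          rw [Nat.even_add_one] at heven
          exact heven (by exact h)
        · exact h
      rw [hABsucc.2]
      refine Or.inr (mem_tr.2 ⟨2^(i+1) - 1, hA hiodd, by omega⟩)

/-- base case at i = 2l -/
lemma base {l : ℕ} (hl : 1 ≤ l) :
    (AB {0} {1} (mseq l) (2*l)).1 ∪ (AB {0} {1} (mseq l) (2*l)).2 = Set.Iio (mseq l (2*l)) ∧
    (AB {0} {1} (mseq l) (2*l)).1 ∩ (AB {0} {1} (mseq l) (2*l)).2 = {2^(2*l) - 1} := by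
  obtain ⟨hU, hI, hA, _⟩ := pre hl (2*l - 1) le_rfl
  have h2l : 2*l - 1 + 1 = 2*l := by omega
  rw [h2l] at hU
  rw [h2l] at hA
  have hmA : 2^(2*l) - 1 ∈ (AB {0} {1} (mseq l) (2*l-1)).1 := hA ⟨l - 1, by omega⟩
  set A := (AB {0} {1} (mseq l) (2*l-1)).1 with hAdef
  set B := (AB {0} {1} (mseq l) (2*l-1)).2 with hBdef
  have hAsub : ∀ x ∈ A, x < 2^(2*l) := fun x hx => by
    have : x ∈ A ∪ B := Or.inl hx; rw [hU] at this; exact this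
  have hBsub : ∀ x ∈ B, x < 2^(2*l) := fun x hx => by
    have : x ∈ A ∪ B := Or.inr hx; rw [hU] at this; exact this
  have hIe : ∀ x, x ∈ A → x ∈ B → False := fun x h1 h2 => by
    have : x ∈ A ∩ B := ⟨h1, h2⟩; rw [hI] at this; exact this
  have h0B : (0:ℕ) ∉ B := zero_notMem_B hl _
  have h0A : (0:ℕ) ∈ A := by
    clear hmA hAsub hIe hU hI hA
    rw [hAdef]
    induction (2*l-1) with
    | zero => simp [AB]
    | succ n ih => exact Or.inl ih
  have hstep : (AB {0} {1} (mseq l) (2*l)).1 = A ∪ tr (mseq l (2*l-1)) B ∧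
      (AB {0} {1} (mseq l) (2*l)).2 = B ∪ tr (mseq l (2*l-1)) A := by
    constructor <;> (rw [show 2*l = (2*l-1)+1 by omega]; rfl)
  have hm : mseq l (2*l-1) = 2^(2*l) - 1 := mseq_eq hl
  have hm2l : mseq l (2*l) = 2^(2*l+1) - 1 := by
    rw [mseq_big hl le_rfl]
    simp
  have hpow1 : (2:ℕ) ≤ 2^(2*l) := by
    calc (2:ℕ) = 2^1 := rfl
    _ ≤ 2^(2*l) := Nat.pow_le_pow_right (by norm_num) (by omega)
  have hpow : (2:ℕ)^(2*l+1) = 2^(2*l) + 2^(2*l) := by rw [pow_succ]; ring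
  constructor
  · rw [hstep.1, hstep.2, hm, hm2l]
    ext x
    simp only [Set.mem_union, mem_tr, Set.mem_Iio]
    constructor
    · rintro ((h|⟨a,ha,rfl⟩)|(h|⟨a,ha,rfl⟩))
      · have := hAsub x h; omega
      · have := hBsub a ha; omega
      · have := hBsub x h; omega
      · have := hAsub a ha; omega
    · intro hx
      rcases lt_or_ge x (2^(2*l)) with h | h
      · have : x ∈ A ∪ B := by rw [hU]; exact h
        rcases this with h' | h'
        · exact Or.inl (Or.inl h')
        · exact Or.inr (Or.inl h')
      · have : x - (2^(2*l) - 1) ∈ A ∪ B := by rw [hU]; simp; omega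
        rcases this with h' | h'
        · exact Or.inr (Or.inr ⟨_, h', by omega⟩)
        · exact Or.inl (Or.inr ⟨_, h', by omega⟩)
  · rw [hstep.1, hstep.2, hm]
    ext x
    simp only [Set.mem_inter_iff, Set.mem_union, mem_tr, Set.mem_singleton_iff]
    constructor
    · rintro ⟨(h1|⟨a,ha,hae⟩), (h2|⟨b,hb,hbe⟩)⟩
      · exact absurd h2 (fun h => hIe x h1 h)
      · have := hAsub x h1; have hb0 : b = 0 := by omega
        omega
      · have := hBsub x h2
        have ha0 : a = 0 := by omega
        exact absurd (ha0 ▸ ha) h0B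
      · have : a = b := by omega
        exact absurd ha (fun h => hIe a (this ▸ hb) h)
    · rintro rfl
      exact ⟨Or.inl hmA, Or.inr ⟨0, h0A, by omega⟩⟩

end S13

theorem stmt_13 (l : ℕ) (hl : 1 ≤ l) :
    ∀ i, 2 * l ≤ i →
      (AB {0} {1} (mseq l) i).1 ∪ (AB {0} {1} (mseq l) i).2 = Set.Iio (mseq l i) ∧
      (AB {0} {1} (mseq l) i).1 ∩ (AB {0} {1} (mseq l) i).2
        = {x : ℕ | ∃ k < 2 ^ (i - 2 * l),
            x = 2 ^ (2 * l) - 1 + k * (2 ^ (2 * l + 1) - 1)} := by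
  intro i hi
  induction i, hi using Nat.le_induction with
  | base =>
    obtain ⟨hU, hI⟩ := S13.base hl
    refine ⟨hU, ?_⟩
    rw [hI]
    ext x
    simp only [Set.mem_singleton_iff, Set.mem_setOf_eq, Nat.sub_self, pow_zero,
      Nat.lt_one_iff]
    constructor
    · rintro rfl; exact ⟨0, rfl, by ring⟩
    · rintro ⟨k, rfl, rfl⟩; ring
  | succ i hi ih =>
    obtain ⟨hU, hI⟩ := ih
    set A := (AB {0} {1} (mseq l) i).1 with hAdef
    set B := (AB {0} {1} (mseq l) i).2 with hBdef
    set m := mseq l i with hmdef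
    have hAsub : ∀ x ∈ A, x < m := fun x hx => by
      have : x ∈ A ∪ B := Or.inl hx; rw [hU] at this; exact this
    have hBsub : ∀ x ∈ B, x < m := fun x hx => by
      have : x ∈ A ∪ B := Or.inr hx; rw [hU] at this; exact this
    have hstep : (AB {0} {1} (mseq l) (i+1)).1 = A ∪ tr m B ∧
        (AB {0} {1} (mseq l) (i+1)).2 = B ∪ tr m A := ⟨rfl, rfl⟩
    have hdbl : mseq l (i+1) = 2 * m := S13.mseq_double hl hi
    have hmprod : m = 2^(i - 2*l) * (2^(2*l+1) - 1) := S13.mseq_prod hl hi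
    constructor
    · rw [hstep.1, hstep.2, hdbl]
      ext x
      simp only [Set.mem_union, S13.mem_tr, Set.mem_Iio]
      constructor
      · rintro ((h|⟨a,ha,rfl⟩)|(h|⟨a,ha,rfl⟩))
        · have := hAsub x h; omega
        · have := hBsub a ha; omega
        · have := hBsub x h; omega
        · have := hAsub a ha; omega
      · intro hx
        rcases lt_or_ge x m with h | h
        · have : x ∈ A ∪ B := by rw [hU]; exact h
          rcases this with h' | h'
          · exact Or.inl (Or.inl h')
          · exact Or.inr (Or.inl h')
        · have : x - m ∈ A ∪ B := by rw [hU]; simp; omega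
          rcases this with h' | h'
          · exact Or.inr (Or.inr ⟨_, h', by omega⟩)
          · exact Or.inl (Or.inr ⟨_, h', by omega⟩)
    · rw [hstep.1, hstep.2]
      have hIab : ∀ x, x ∈ A ∩ B ↔ ∃ k < 2^(i - 2*l),
          x = 2^(2*l) - 1 + k * (2^(2*l+1) - 1) := fun x => by
        rw [hI]; rfl
      ext x
      simp only [Set.mem_inter_iff, Set.mem_union, S13.mem_tr, Set.mem_setOf_eq]
      have hsucc : i + 1 - 2*l = (i - 2*l) + 1 := by omega
      have hK : (2:ℕ)^(i + 1 - 2*l) = 2 * 2^(i - 2*l) := by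
        rw [hsucc, pow_succ]; ring
      set K := (2:ℕ)^(i - 2*l) with hKdef
      set d := (2:ℕ)^(2*l+1) - 1 with hddef
      set c := (2:ℕ)^(2*l) - 1 with hcdef
      constructor
      · rintro ⟨(h1|⟨a,ha,hae⟩), (h2|⟨b,hb,hbe⟩)⟩
        · obtain ⟨k, hk, hkx⟩ := (hIab x).1 ⟨h1, h2⟩
          exact ⟨k, by omega, hkx⟩
        · have := hAsub x h1; have := hAsub b hb; omega
        · have := hBsub x h2; have := hBsub a ha; omega
        · have hab : a = b := by omega
          obtain ⟨k, hk, hkx⟩ := (hIab a).1 ⟨by rw [hab]; exact hb, ha⟩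
          refine ⟨k + K, by omega, ?_⟩
          rw [← hae, hkx, hmprod]
          ring
      · rintro ⟨k, hk, rfl⟩
        rcases lt_or_ge k K with h | h
        · obtain ⟨h1, h2⟩ := (hIab _).2 ⟨k, h, rfl⟩
          exact ⟨Or.inl h1, Or.inl h2⟩
        · obtain ⟨j, rfl⟩ : ∃ j, k = K + j := ⟨k - K, by omega⟩
          have hj : j < K := by omega
          obtain ⟨h1, h2⟩ := (hIab _).2 ⟨j, hj, rfl⟩
          have heq : m + (c + j * d) = c + (K + j) * d := by
            rw [hmprod]; ring
          exact ⟨Or.inr ⟨_, h2, heq⟩, Or.inr ⟨_, h1, heq⟩⟩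
end

section
/- There exist sets A, B ⊆ ℕ such that R_A = R_B, A ∪ B = ℕ, A ∩ B is an infinite arithmetic progression, and A ≠ B. (Disproof of the conjecture of Tang and Yu.) -/
open Finset

namespace CL

/-- Thue–Morse sign: `(-1)^(binary weight)`. -/
def m : ℕ → ℤ
  | 0 => 1
  | (n+1) => (if (n+1) % 2 = 0 then 1 else -1) * m ((n+1)/2)
decreasing_by omega

lemma m_two_mul (k : ℕ) : m (2*k) = m k := by
  cases k with
  | zero => rfl
  | succ n =>
    rw [show 2*(n+1) = (2*n+1)+1 by ring, m]
    have h1 : (2*n+1+1) % 2 = 0 := by omega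
    have h2 : (2*n+1+1)/2 = n+1 := by omega
    rw [h1] at *
    simp [h2]

lemma m_two_mul_add_one (k : ℕ) : m (2*k+1) = -m k := by
  rw [show 2*k+1 = (2*k)+1 by ring, m]
  have h1 : (2*k+1) % 2 = 1 := by omega
  have h2 : (2*k+1)/2 = k := by omega
  simp [h1, h2]

lemma m_pm (k : ℕ) : m k = 1 ∨ m k = -1 := by
  induction k using Nat.strong_induction_on with
  | _ k ih =>
    match k with
    | 0 => left; rw [m]
    | (n+1) =>
      rw [m]
      rcases ih ((n+1)/2) (by omega) with h | h <;>
        by_cases h2 : (n+1) % 2 = 0 <;> simp [h, h2]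

/-- block pattern -/
def P : ℕ → ℤ
  | 0 => 1 | 1 => -1 | 2 => -1 | 3 => 0 | 4 => 1 | 5 => 1 | _ => -1

/-- prefix sums of `P` -/
def Q : ℕ → ℤ
  | 0 => 1 | 1 => 0 | 2 => -1 | 3 => -1 | 4 => 0 | 5 => 1 | _ => 0

def eps (n : ℕ) : ℤ := m (n / 7) * P (n % 7)

def c (n : ℕ) : ℤ := if n % 7 = 3 then 1 else 0

def S' (n : ℕ) : ℤ := ∑ p ∈ range (n+1), eps p

def T' (n : ℕ) : ℤ := ∑ p ∈ range (n+1), eps p * c (n - p)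

def M' (n : ℕ) : ℤ := ∑ i ∈ range (n+1), m i

lemma M'_closed (n : ℕ) : M' n = if n % 2 = 0 then m n else 0 := by
  induction n with
  | zero => simp [M', m]
  | succ n ih =>
    rw [M', Finset.sum_range_succ, ← M', ih]
    by_cases h : n % 2 = 0
    · obtain ⟨k, hk⟩ : ∃ k, n = 2*k := ⟨n/2, by omega⟩
      subst hk
      rw [if_pos (by omega), if_neg (by omega), m_two_mul, m_two_mul_add_one]
      ring
    · obtain ⟨k, hk⟩ : ∃ k, n = 2*k+1 := ⟨n/2, by omega⟩
      subst hk
      rw [if_neg (by omega), if_pos (by omega)]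
      ring

lemma S'_closed (n : ℕ) : S' n = m (n / 7) * Q (n % 7) := by
  induction n with
  | zero => rw [S']; simp [eps, Q, P]
  | succ n ih =>
    rw [S', Finset.sum_range_succ, ← S', ih]
    by_cases h : (n+1) % 7 = 0
    · have h6 : n % 7 = 6 := by omega
      have h7 : (n+1) / 7 = n / 7 + 1 := by omega
      rw [h6, h, h7, eps, h, h7]
      simp [Q, P]
    · have h1 : (n+1) / 7 = n / 7 := by omega
      have h2 : n % 7 = (n+1) % 7 - 1 := by omega
      rw [eps, h1, h2]
      have h7 : (n+1) % 7 < 7 := by omega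
      interval_cases h3 : (n+1) % 7 <;> simp_all [P, Q] <;> ring

lemma c_add7 (k : ℕ) : c (k + 7) = c k := by
  unfold c; rw [Nat.add_mod_right]

lemma T'_step (n : ℕ) : T' (n + 7) = T' n + eps (n + 4) := by
  have hsplit : T' (n+7) = (∑ p ∈ range (n+1), eps p * c (n+7-p))
      + ∑ p ∈ Finset.Ico (n+1) (n+8), eps p * c (n+7-p) := by
    rw [T', show n+7+1 = n+8 by ring, Finset.range_eq_Ico,
      ← Finset.sum_Ico_consecutive _ (by omega : 0 ≤ n+1) (by omega : n+1 ≤ n+8),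
      ← Finset.range_eq_Ico]
  rw [hsplit]
  have h1 : ∑ p ∈ range (n+1), eps p * c (n+7-p) = T' n := by
    rw [T']
    refine Finset.sum_congr rfl (fun p hp => ?_)
    have hp' : p ≤ n := by simpa [Nat.lt_succ_iff] using hp
    have : n + 7 - p = (n - p) + 7 := by omega
    rw [this, c_add7]
  have h2 : ∑ p ∈ Finset.Ico (n+1) (n+8), eps p * c (n+7-p) = eps (n+4) := by
    rw [Finset.sum_Ico_eq_sum_range]
    have : ∀ i ∈ range (n+8-(n+1)), eps (n+1+i) * c (n+7-(n+1+i))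
        = eps (n+1+i) * c (6-i) := by
      intro i hi
      have : n+7-(n+1+i) = 6 - i := by omega
      rw [this]
    rw [Finset.sum_congr rfl this, show n+8-(n+1) = 7 by omega]
    simp [Finset.sum_range_succ, c, show n+1+3 = n+4 by ring]
  rw [h1, h2]

/-- closed form for `T'` -/
def Tc (n : ℕ) : ℤ :=
  if n < 3 then 0
  else P ((n-3) % 7) * (if ((n-3)/7) % 2 = 0 then m ((n-3)/7) else 0)

lemma Tc_step (n : ℕ) (h : 7 ≤ n) : Tc n = Tc (n-7) + eps (n-3) := by
  by_cases h10 : n < 10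
  · have e1 : (n-3) / 7 = 0 := by omega
    have e2 : (n-3) % 7 = n - 3 := by omega
    rw [Tc, Tc, if_neg (show ¬ n < 3 by omega), if_pos (show n - 7 < 3 by omega),
      eps, e1, e2, if_pos (show (0:ℕ) % 2 = 0 from rfl), m]
    ring
  · have e0 : n - 7 - 3 = n - 10 := by omega
    have e1 : (n-10) % 7 = (n-3) % 7 := by omega
    have e2 : (n-3) / 7 = (n-10) / 7 + 1 := by omega
    rw [Tc, Tc, if_neg (show ¬ n < 3 by omega), if_neg (show ¬ n - 7 < 3 by omega),
      eps, e0, e1, e2]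
    generalize (n-10)/7 = I
    by_cases hp : I % 2 = 0
    · obtain ⟨k, hk⟩ : ∃ k, I = 2*k := ⟨I/2, by omega⟩
      rw [if_neg (show ¬ (I+1) % 2 = 0 by omega), if_pos hp, hk,
        m_two_mul_add_one, m_two_mul]
      ring
    · rw [if_pos (show (I+1) % 2 = 0 by omega), if_neg hp]
      ring

lemma T'_closed (n : ℕ) : T' n = Tc n := by
  induction n using Nat.strong_induction_on with
  | _ n ih =>
    by_cases h7 : n < 7
    · have hm0 : m 0 = 1 := by rw [m]
      interval_cases n <;>
        simp [T', Tc, Finset.sum_range_succ, eps, c, P, hm0] <;> norm_num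
    · have := T'_step (n - 7)
      rw [show n-7+7 = n by omega, show n-7+4 = n-3 by omega] at this
      rw [this, ih (n-7) (by omega), Tc_step n (by omega)]

lemma key (n : ℕ) : S' n + T' n = if n % 2 = 0 then eps (n / 2) else 0 := by
  have hm0 : m 0 = 1 := by rw [m]
  rw [S'_closed, T'_closed]
  obtain ⟨k, r, hr, rfl⟩ : ∃ k r, r < 14 ∧ n = 14*k+r := ⟨n/14, n%14, by omega, by omega⟩
  interval_cases r
  · rcases Nat.eq_zero_or_pos k with rfl | hk
    · norm_num [Tc, Q, eps, P, hm0]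
    · rw [show (14*k+0)/7 = 2*k by omega, show (14*k+0)%7 = 0 by omega]
      rw [Tc, if_neg (show ¬ 14*k+0 < 3 by omega)]
      rw [if_neg (show ¬ ((14*k+0-3)/7) % 2 = 0 by omega)]
      rw [if_pos (show (14*k+0)%2 = 0 by omega), eps, show (14*k+0)/2 = 7*k+0 by omega, show (7*k+0)/7 = k by omega, show (7*k+0)%7 = 0 by omega]
      try rw [m_two_mul]
      simp [P, Q]
      try ring
  · rcases Nat.eq_zero_or_pos k with rfl | hk
    · norm_num [Tc, Q, eps, P, hm0]
    · rw [show (14*k+1)/7 = 2*k by omega, show (14*k+1)%7 = 1 by omega]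
      rw [Tc, if_neg (show ¬ 14*k+1 < 3 by omega)]
      rw [if_neg (show ¬ ((14*k+1-3)/7) % 2 = 0 by omega)]
      rw [if_neg (show ¬ (14*k+1)%2 = 0 by omega)]
      try rw [m_two_mul]
      simp [P, Q]
      try ring
  · rcases Nat.eq_zero_or_pos k with rfl | hk
    · norm_num [Tc, Q, eps, P, hm0]
    · rw [show (14*k+2)/7 = 2*k by omega, show (14*k+2)%7 = 2 by omega]
      rw [Tc, if_neg (show ¬ 14*k+2 < 3 by omega)]
      rw [if_neg (show ¬ ((14*k+2-3)/7) % 2 = 0 by omega)]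
      rw [if_pos (show (14*k+2)%2 = 0 by omega), eps, show (14*k+2)/2 = 7*k+1 by omega, show (7*k+1)/7 = k by omega, show (7*k+1)%7 = 1 by omega]
      try rw [m_two_mul]
      simp [P, Q]
      try ring
  · rw [show (14*k+3)/7 = 2*k by omega, show (14*k+3)%7 = 3 by omega]
    rw [Tc, if_neg (show ¬ 14*k+3 < 3 by omega)]
    rw [show (14*k+3-3)/7 = 2*k by omega, show (14*k+3-3)%7 = 0 by omega, if_pos (show (2*k)%2 = 0 by omega)]
    rw [if_neg (show ¬ (14*k+3)%2 = 0 by omega)]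
    try rw [m_two_mul]
    simp [P, Q]
    try ring
  · rw [show (14*k+4)/7 = 2*k by omega, show (14*k+4)%7 = 4 by omega]
    rw [Tc, if_neg (show ¬ 14*k+4 < 3 by omega)]
    rw [show (14*k+4-3)/7 = 2*k by omega, show (14*k+4-3)%7 = 1 by omega, if_pos (show (2*k)%2 = 0 by omega)]
    rw [if_pos (show (14*k+4)%2 = 0 by omega), eps, show (14*k+4)/2 = 7*k+2 by omega, show (7*k+2)/7 = k by omega, show (7*k+2)%7 = 2 by omega]
    try rw [m_two_mul]
    simp [P, Q]
    try ring
  · rw [show (14*k+5)/7 = 2*k by omega, show (14*k+5)%7 = 5 by omega]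
    rw [Tc, if_neg (show ¬ 14*k+5 < 3 by omega)]
    rw [show (14*k+5-3)/7 = 2*k by omega, show (14*k+5-3)%7 = 2 by omega, if_pos (show (2*k)%2 = 0 by omega)]
    rw [if_neg (show ¬ (14*k+5)%2 = 0 by omega)]
    try rw [m_two_mul]
    simp [P, Q]
    try ring
  · rw [show (14*k+6)/7 = 2*k by omega, show (14*k+6)%7 = 6 by omega]
    rw [Tc, if_neg (show ¬ 14*k+6 < 3 by omega)]
    rw [show (14*k+6-3)/7 = 2*k by omega, show (14*k+6-3)%7 = 3 by omega, if_pos (show (2*k)%2 = 0 by omega)]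
    rw [if_pos (show (14*k+6)%2 = 0 by omega), eps, show (14*k+6)/2 = 7*k+3 by omega, show (7*k+3)/7 = k by omega, show (7*k+3)%7 = 3 by omega]
    try rw [m_two_mul]
    simp [P, Q]
    try ring
  · rw [show (14*k+7)/7 = 2*k+1 by omega, show (14*k+7)%7 = 0 by omega]
    rw [Tc, if_neg (show ¬ 14*k+7 < 3 by omega)]
    rw [show (14*k+7-3)/7 = 2*k by omega, show (14*k+7-3)%7 = 4 by omega, if_pos (show (2*k)%2 = 0 by omega)]
    rw [if_neg (show ¬ (14*k+7)%2 = 0 by omega)]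
    rw [m_two_mul_add_one]
    try rw [m_two_mul]
    simp [P, Q]
    try ring
  · rw [show (14*k+8)/7 = 2*k+1 by omega, show (14*k+8)%7 = 1 by omega]
    rw [Tc, if_neg (show ¬ 14*k+8 < 3 by omega)]
    rw [show (14*k+8-3)/7 = 2*k by omega, show (14*k+8-3)%7 = 5 by omega, if_pos (show (2*k)%2 = 0 by omega)]
    rw [if_pos (show (14*k+8)%2 = 0 by omega), eps, show (14*k+8)/2 = 7*k+4 by omega, show (7*k+4)/7 = k by omega, show (7*k+4)%7 = 4 by omega]
    rw [m_two_mul_add_one]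
    try rw [m_two_mul]
    simp [P, Q]
    try ring
  · rw [show (14*k+9)/7 = 2*k+1 by omega, show (14*k+9)%7 = 2 by omega]
    rw [Tc, if_neg (show ¬ 14*k+9 < 3 by omega)]
    rw [show (14*k+9-3)/7 = 2*k by omega, show (14*k+9-3)%7 = 6 by omega, if_pos (show (2*k)%2 = 0 by omega)]
    rw [if_neg (show ¬ (14*k+9)%2 = 0 by omega)]
    rw [m_two_mul_add_one]
    try rw [m_two_mul]
    simp [P, Q]
    try ring
  · rw [show (14*k+10)/7 = 2*k+1 by omega, show (14*k+10)%7 = 3 by omega]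
    rw [Tc, if_neg (show ¬ 14*k+10 < 3 by omega)]
    rw [if_neg (show ¬ ((14*k+10-3)/7) % 2 = 0 by omega)]
    rw [if_pos (show (14*k+10)%2 = 0 by omega), eps, show (14*k+10)/2 = 7*k+5 by omega, show (7*k+5)/7 = k by omega, show (7*k+5)%7 = 5 by omega]
    rw [m_two_mul_add_one]
    try rw [m_two_mul]
    simp [P, Q]
    try ring
  · rw [show (14*k+11)/7 = 2*k+1 by omega, show (14*k+11)%7 = 4 by omega]
    rw [Tc, if_neg (show ¬ 14*k+11 < 3 by omega)]
    rw [if_neg (show ¬ ((14*k+11-3)/7) % 2 = 0 by omega)]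
    rw [if_neg (show ¬ (14*k+11)%2 = 0 by omega)]
    rw [m_two_mul_add_one]
    try rw [m_two_mul]
    simp [P, Q]
    try ring
  · rw [show (14*k+12)/7 = 2*k+1 by omega, show (14*k+12)%7 = 5 by omega]
    rw [Tc, if_neg (show ¬ 14*k+12 < 3 by omega)]
    rw [if_neg (show ¬ ((14*k+12-3)/7) % 2 = 0 by omega)]
    rw [if_pos (show (14*k+12)%2 = 0 by omega), eps, show (14*k+12)/2 = 7*k+6 by omega, show (7*k+6)/7 = k by omega, show (7*k+6)%7 = 6 by omega]
    rw [m_two_mul_add_one]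
    try rw [m_two_mul]
    simp [P, Q]
    try ring
  · rw [show (14*k+13)/7 = 2*k+1 by omega, show (14*k+13)%7 = 6 by omega]
    rw [Tc, if_neg (show ¬ 14*k+13 < 3 by omega)]
    rw [if_neg (show ¬ ((14*k+13-3)/7) % 2 = 0 by omega)]
    rw [if_neg (show ¬ (14*k+13)%2 = 0 by omega)]
    rw [m_two_mul_add_one]
    try rw [m_two_mul]
    simp [P, Q]
    try ring

def A : Set ℕ := {n | eps n = 1 ∨ n % 7 = 3}
def B : Set ℕ := {n | eps n = -1 ∨ n % 7 = 3}

lemma eps_cases (p : ℕ) :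
    (p % 7 = 3 ∧ eps p = 0) ∨ (p % 7 ≠ 3 ∧ (eps p = 1 ∨ eps p = -1)) := by
  have h7 : p % 7 < 7 := by omega
  rcases m_pm (p/7) with h | h <;> unfold eps <;>
    interval_cases hp : p % 7 <;> simp [P, h]

lemma eps_mul_c (p : ℕ) : eps p * c p = 0 := by
  rcases eps_cases p with ⟨h3, h0⟩ | ⟨hne, _⟩
  · rw [h0]; ring
  · rw [c, if_neg hne]; ring

lemma indA (p : ℕ) [Decidable (p ∈ A)] :
    2 * (if p ∈ A then (1:ℤ) else 0) = 1 + c p + eps p := by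
  have hA : p ∈ A ↔ (eps p = 1 ∨ p % 7 = 3) := Iff.rfl
  rcases eps_cases p with ⟨h3, h0⟩ | ⟨hne, h1 | h1⟩
  · simp [hA, c, h3, h0]
  · simp [hA, c, hne, h1]
  · simp [hA, c, hne, h1]

lemma indB (p : ℕ) [Decidable (p ∈ B)] :
    2 * (if p ∈ B then (1:ℤ) else 0) = 1 + c p - eps p := by
  have hB : p ∈ B ↔ (eps p = -1 ∨ p % 7 = 3) := Iff.rfl
  rcases eps_cases p with ⟨h3, h0⟩ | ⟨hne, h1 | h1⟩
  · simp [hB, c, h3, h0]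
  · simp [hB, c, hne, h1]
  · simp [hB, c, hne, h1]

lemma half_sum (n : ℕ) [DecidablePred (· ∈ A)] [DecidablePred (· ∈ B)] :
    ∑ p ∈ range ((n+1)/2), ((if p ∈ A then (1:ℤ) else 0) * (if n - p ∈ A then 1 else 0))
      = ∑ p ∈ range ((n+1)/2), ((if p ∈ B then (1:ℤ) else 0) * (if n - p ∈ B then 1 else 0)) := by
  set h := (n+1)/2 with hh
  set w : ℕ → ℤ := fun p => (1 + c p) * eps (n-p) + eps p * (1 + c (n-p)) with hw
  have stepA : ∀ p : ℕ,
      4 * ((if p ∈ A then (1:ℤ) else 0) * (if n - p ∈ A then 1 else 0))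
        - 4 * ((if p ∈ B then (1:ℤ) else 0) * (if n - p ∈ B then 1 else 0)) = 2 * w p := by
    intro p
    have h1 := indA p; have h2 := indA (n-p); have h3 := indB p; have h4 := indB (n-p)
    have expand : ∀ x1 x2 x3 x4 : ℤ, 4 * (x1 * x2) - 4 * (x3 * x4)
        = (2*x1)*(2*x2) - (2*x3)*(2*x4) := by intros; ring
    rw [expand, h1, h2, h3, h4, hw]
    ring
  have e1 : ∑ p ∈ range (n+1), eps p * (1 + c (n-p)) = S' n + T' n := by
    rw [S', T', ← Finset.sum_add_distrib]
    exact Finset.sum_congr rfl (fun p _ => by ring)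
  have e2 : ∑ p ∈ range (n+1), (1 + c p) * eps (n-p) = S' n + T' n := by
    rw [← Finset.sum_range_reflect (fun p => (1 + c p) * eps (n - p)) (n+1), ← e1]
    refine Finset.sum_congr rfl (fun p hp => ?_)
    have hp' : p ≤ n := by simpa [Nat.lt_succ_iff] using hp
    rw [show n + 1 - 1 - p = n - p by omega, show n - (n - p) = p by omega]
    ring
  have stepB : ∑ p ∈ range (n+1), w p = 2 * (S' n + T' n) := by
    rw [hw]
    rw [Finset.sum_add_distrib, e1, e2]
    ring
  have wsym : ∀ p, p ≤ n → w (n - p) = w p := by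
    intro p hp
    simp only [hw]
    rw [show n - (n-p) = p by omega]
    ring
  have stepC : ∑ p ∈ range (n+1), w p
      = 2 * ∑ p ∈ range h, w p + (if n % 2 = 0 then w (n/2) else 0) := by
    have hsplit : ∑ p ∈ range (n+1), w p
        = ∑ p ∈ range h, w p + ∑ p ∈ Finset.Ico h (n+1), w p := by
      rw [Finset.range_eq_Ico,
        ← Finset.sum_Ico_consecutive _ (Nat.zero_le h) (by omega : h ≤ n+1),
        ← Finset.range_eq_Ico]
    have htail : ∑ p ∈ Finset.Ico h (n+1), w p = ∑ i ∈ range (n/2+1), w (h+i) := by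
      rw [Finset.sum_Ico_eq_sum_range, show n+1-h = n/2+1 by omega]
    have hrefl : ∑ i ∈ range (n/2+1), w (h+i) = ∑ i ∈ range (n/2+1), w i := by
      have l1 : ∑ i ∈ range (n/2+1), w (h+i)
          = ∑ i ∈ range (n/2+1), (fun i => w (n - i)) (n/2+1-1-i) := by
        refine Finset.sum_congr rfl (fun i hi => ?_)
        have hi' : i ≤ n/2 := by simpa [Nat.lt_succ_iff] using hi
        simp only
        rw [show n - (n/2+1-1-i) = h + i by omega]
      rw [l1, Finset.sum_range_reflect (fun i => w (n - i)) (n/2+1)]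
      refine Finset.sum_congr rfl (fun i hi => ?_)
      have hi' : i ≤ n/2 := by simpa [Nat.lt_succ_iff] using hi
      exact wsym i (by omega)
    by_cases hp : n % 2 = 0
    · rw [hsplit, htail, hrefl, if_pos hp, show n/2+1 = h+1 by omega,
        Finset.sum_range_succ, show h = n/2 by omega]
      ring
    · rw [hsplit, htail, hrefl, if_neg hp, show n/2+1 = h by omega]
      ring
  have diag : (if n % 2 = 0 then w (n/2) else 0)
      = 2 * (if n % 2 = 0 then eps (n/2) else 0) := by
    by_cases hp : n % 2 = 0
    · rw [if_pos hp, if_pos hp, hw]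
      simp only
      rw [show n - n/2 = n/2 by omega]
      linear_combination 2 * eps_mul_c (n/2)
    · rw [if_neg hp, if_neg hp]; ring
  have hzero : ∑ p ∈ range h, w p = 0 := by
    have hC := stepC
    rw [stepB, key n, diag] at hC
    linarith
  have e3 : ∑ p ∈ range h,
      (4 * ((if p ∈ A then (1:ℤ) else 0) * (if n - p ∈ A then 1 else 0))
        - 4 * ((if p ∈ B then (1:ℤ) else 0) * (if n - p ∈ B then 1 else 0)))
      = ∑ p ∈ range h, 2 * w p :=
    Finset.sum_congr rfl (fun p _ => stepA p)
  rw [Finset.sum_sub_distrib, ← Finset.mul_sum, ← Finset.mul_sum, ← Finset.mul_sum] at e3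
  rw [hzero] at e3
  linarith

lemma R_eq (S : Set ℕ) [DecidablePred (· ∈ S)] (n : ℕ) :
    R S n = (Finset.filter (fun p => p ∈ S ∧ n - p ∈ S) (range ((n+1)/2))).card := by
  rw [R]
  have hset : {p : ℕ × ℕ | p.1 ∈ S ∧ p.2 ∈ S ∧ p.1 < p.2 ∧ p.1 + p.2 = n}
      = (fun p => (p, n - p)) ''
        ↑(Finset.filter (fun p => p ∈ S ∧ n - p ∈ S) (range ((n+1)/2))) := by
    ext ⟨x, y⟩
    simp only [Set.mem_setOf_eq, Set.mem_image, Finset.coe_filter, Finset.mem_range,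
      Prod.mk.injEq]
    constructor
    · rintro ⟨hx, hy, hlt, hsum⟩
      exact ⟨x, ⟨by omega, hx, by rwa [show n - x = y by omega]⟩, rfl, by omega⟩
    · rintro ⟨p, ⟨hp, hS, hS'⟩, rfl, rfl⟩
      exact ⟨hS, hS', by omega, by omega⟩
  rw [hset, Set.ncard_image_of_injective _
    (fun a b hab => by simpa using congrArg Prod.fst hab), Set.ncard_coe_finset]

lemma card_eq (S : Set ℕ) [DecidablePred (· ∈ S)] (n : ℕ) :
    (((Finset.filter (fun p => p ∈ S ∧ n - p ∈ S) (range ((n+1)/2))).card : ℤ))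
      = ∑ p ∈ range ((n+1)/2),
          ((if p ∈ S then (1:ℤ) else 0) * (if n - p ∈ S then 1 else 0)) := by
  rw [Finset.card_filter]
  push_cast
  refine Finset.sum_congr rfl (fun p _ => ?_)
  by_cases h1 : p ∈ S <;> by_cases h2 : n - p ∈ S <;> simp [h1, h2]

lemma eps_zero : eps 0 = 1 := by
  rw [eps, show (0:ℕ)/7 = 0 from rfl, show (0:ℕ)%7 = 0 from rfl, m]
  simp [P]

theorem main :
    ∃ A B : Set ℕ, R A = R B ∧ A ∪ B = Set.univ ∧ A ≠ B ∧
      ∃ r d : ℕ, 0 < d ∧ A ∩ B = {x : ℕ | ∃ k : ℕ, x = r + k * d} := by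
  classical
  refine ⟨A, B, ?_, ?_, ?_, 3, 7, by norm_num, ?_⟩
  · funext n
    have h1 := R_eq A n
    have h2 := R_eq B n
    have h3 : (((Finset.filter (fun p => p ∈ A ∧ n - p ∈ A) (range ((n+1)/2))).card : ℤ))
        = ((Finset.filter (fun p => p ∈ B ∧ n - p ∈ B) (range ((n+1)/2))).card : ℤ) := by
      rw [card_eq, card_eq, half_sum]
    rw [h1, h2]
    exact_mod_cast h3
  · ext x
    simp only [Set.mem_union, Set.mem_univ, iff_true, A, B, Set.mem_setOf_eq]
    rcases eps_cases x with ⟨h3, _⟩ | ⟨_, h1 | h1⟩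
    · exact Or.inl (Or.inr h3)
    · exact Or.inl (Or.inl h1)
    · exact Or.inr (Or.inl h1)
  · intro hEq
    have h0A : (0:ℕ) ∈ A := Or.inl eps_zero
    rw [hEq] at h0A
    rcases h0A with h | h
    · rw [eps_zero] at h; norm_num at h
    · norm_num at h
  · ext x
    simp only [Set.mem_inter_iff, Set.mem_setOf_eq]
    constructor
    · rintro ⟨h1 | h1, h2 | h2⟩
      · rw [h1] at h2; norm_num at h2
      · exact ⟨x/7, by omega⟩
      · exact ⟨x/7, by omega⟩
      · exact ⟨x/7, by omega⟩
    · rintro ⟨k, rfl⟩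
      exact ⟨Or.inr (by omega), Or.inr (by omega)⟩

end CL


theorem stmt_15 :
    ∃ A B : Set ℕ, R A = R B ∧ A ∪ B = Set.univ ∧ A ≠ B ∧
      ∃ r d : ℕ, 0 < d ∧ A ∩ B = {x : ℕ | ∃ k : ℕ, x = r + k * d} := CL.main
end

section
/- If A, B ⊆ ℕ satisfy m ∉ (A−B) ∪ (B−A) for a nonnegative integer m, then for A₁ = A ∪ (m+B), B₁ = B ∪ (m+A), and every n ∈ ℕ: R_{A₁}(n) = R_A(n) + R_B(n−2m) + |{(a,b) ∈ A×B : a+b = n−m}|, where R_B(n−2m) is taken to be 0 if n < 2m. -/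
theorem stmt_16 (A B : Set ℕ) (m : ℕ)
    (hm : ∀ a ∈ A, ∀ b ∈ B, a ≠ b + m ∧ b ≠ a + m) (n : ℕ) :
    R (A ∪ tr m B) n
      = R A n + R B (n - 2 * m)
        + {p : ℕ × ℕ | p.1 ∈ A ∧ p.2 ∈ B ∧ p.1 + p.2 + m = n}.ncard := by
  classical
  have hAB : ∀ x, x ∈ A → x ∈ tr m B → False := by
    rintro x hxA ⟨b, hb, rfl⟩
    exact (hm _ hxA b hb).1 (Nat.add_comm m b)
  set S1 : Set (ℕ × ℕ) := {p | p.1 ∈ A ∧ p.2 ∈ A ∧ p.1 < p.2 ∧ p.1 + p.2 = n} with hS1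
  set S2 : Set (ℕ × ℕ) := {p | p.1 ∈ tr m B ∧ p.2 ∈ tr m B ∧ p.1 < p.2 ∧ p.1 + p.2 = n}
    with hS2
  set S3 : Set (ℕ × ℕ) :=
    {p | ((p.1 ∈ A ∧ p.2 ∈ tr m B) ∨ (p.1 ∈ tr m B ∧ p.2 ∈ A)) ∧ p.1 < p.2 ∧ p.1 + p.2 = n}
    with hS3
  have hsub : ∀ (T : Set (ℕ × ℕ)), (∀ p ∈ T, p.1 + p.2 = n) → T.Finite := by
    intro T hT
    apply (Set.finite_Iic ((n, n) : ℕ × ℕ)).subset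
    rintro ⟨x, y⟩ hxy
    have := hT _ hxy
    simp only [Prod.mk_le_mk, Set.mem_Iic] at *
    omega
  have fin1 : S1.Finite := hsub _ (by rintro ⟨x, y⟩ ⟨_, _, _, h⟩; exact h)
  have fin2 : S2.Finite := hsub _ (by rintro ⟨x, y⟩ ⟨_, _, _, h⟩; exact h)
  have fin3 : S3.Finite := hsub _ (by rintro ⟨x, y⟩ ⟨_, _, h⟩; exact h)
  have hunion : {p : ℕ × ℕ | p.1 ∈ A ∪ tr m B ∧ p.2 ∈ A ∪ tr m B ∧ p.1 < p.2 ∧ p.1 + p.2 = n}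
      = (S1 ∪ S2) ∪ S3 := by
    ext ⟨x, y⟩
    simp only [hS1, hS2, hS3, Set.mem_setOf_eq, Set.mem_union]
    tauto
  have hd12 : Disjoint S1 S2 := by
    rw [Set.disjoint_left]
    rintro ⟨x, y⟩ ⟨hx, _, _, _⟩ ⟨hx', _, _, _⟩
    exact hAB x hx hx'
  have hd3 : Disjoint (S1 ∪ S2) S3 := by
    rw [Set.disjoint_left]
    rintro ⟨x, y⟩ h12 ⟨h3, _, _⟩
    rcases h12 with ⟨hx, hy, _, _⟩ | ⟨hx, hy, _, _⟩ <;> rcases h3 with ⟨h1, h2⟩ | ⟨h1, h2⟩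
    · exact hAB y hy h2
    · exact hAB x hx h1
    · exact hAB x h1 hx
    · exact hAB y h2 hy
  -- S2 computation
  have hRB : S2.ncard = R B (n - 2 * m) := by
    have himg : S2 = (fun p : ℕ × ℕ => (m + p.1, m + p.2)) ''
        {p : ℕ × ℕ | p.1 ∈ B ∧ p.2 ∈ B ∧ p.1 < p.2 ∧ p.1 + p.2 = n - 2 * m} := by
      ext p
      simp only [hS2, tr, Set.mem_setOf_eq, Set.mem_image, Prod.ext_iff, Prod.mk.injEq]
      constructor
      · rintro ⟨⟨b1, hb1, h1⟩, ⟨b2, hb2, h2⟩, hlt, hsum⟩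
        exact ⟨(b1, b2), ⟨hb1, hb2, by omega, by omega⟩, by omega, by omega⟩
      · rintro ⟨⟨b1, b2⟩, ⟨hb1, hb2, hlt, hsum⟩, h1, h2⟩
        simp only at h1 h2 hlt hsum
        exact ⟨⟨b1, hb1, by omega⟩, ⟨b2, hb2, by omega⟩, by omega, by omega⟩
    rw [himg, Set.ncard_image_of_injective _ (by
      rintro ⟨a, b⟩ ⟨c, d⟩ h
      simp only [Prod.mk.injEq] at h ⊢
      omega)]
    rfl
  -- S3 computation
  have hRmix : S3.ncard
      = {p : ℕ × ℕ | p.1 ∈ A ∧ p.2 ∈ B ∧ p.1 + p.2 + m = n}.ncard := by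
    set C : Set (ℕ × ℕ) := {p | p.1 ∈ A ∧ p.2 ∈ B ∧ p.1 + p.2 + m = n} with hC
    set g : ℕ × ℕ → ℕ × ℕ :=
      fun p => if p.1 < m + p.2 then (p.1, m + p.2) else (m + p.2, p.1) with hg
    have hne : ∀ a ∈ A, ∀ b ∈ B, a ≠ m + b := by
      intro a ha b hb h
      exact (hm a ha b hb).1 (by omega)
    have himg : S3 = g '' C := by
      ext p
      constructor
      · rintro ⟨h3, hlt, hsum⟩
        rcases h3 with ⟨hx, hy⟩ | ⟨hx, hy⟩
        · simp only [tr, Set.mem_image] at hy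
          obtain ⟨b, hb, hbe⟩ := hy
          refine ⟨(p.1, b), ⟨hx, hb, by omega⟩, ?_⟩
          simp only [hg]
          rw [if_pos (by omega : (p.1, b).1 < m + (p.1, b).2)]
          exact Prod.ext_iff.mpr ⟨rfl, hbe⟩
        · simp only [tr, Set.mem_image] at hx
          obtain ⟨b, hb, hbe⟩ := hx
          refine ⟨(p.2, b), ⟨hy, hb, by omega⟩, ?_⟩
          simp only [hg]
          rw [if_neg (by omega : ¬ (p.2, b).1 < m + (p.2, b).2)]
          exact Prod.ext_iff.mpr ⟨hbe, rfl⟩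
      · rintro ⟨q, ⟨ha, hb, hsum⟩, rfl⟩
        have hne' : q.1 ≠ m + q.2 := hne q.1 ha q.2 hb
        simp only [hg]
        split_ifs with h
        · refine ⟨Or.inl ⟨ha, ⟨q.2, hb, rfl⟩⟩, h, ?_⟩
          show q.1 + (m + q.2) = n
          omega
        · refine ⟨Or.inr ⟨⟨q.2, hb, rfl⟩, ha⟩, by omega, ?_⟩
          show (m + q.2) + q.1 = n
          omega
    have hinj : Set.InjOn g C := by
      rintro ⟨a, b⟩ ⟨ha, hb, -⟩ ⟨a', b'⟩ ⟨ha', hb', -⟩ h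
      simp only [hg] at h
      split_ifs at h with h1 h2 h2 <;> simp only [Prod.mk.injEq] at h ⊢
      · omega
      · exact absurd h.1 (hne a ha b' hb')
      · exact absurd h.2 (hne a ha b' hb')
      · omega
    rw [himg, Set.ncard_image_of_injOn hinj]
  show Set.ncard _ = _
  rw [show {p : ℕ × ℕ | p.1 ∈ A ∪ tr m B ∧ p.2 ∈ A ∪ tr m B ∧ p.1 < p.2 ∧ p.1 + p.2 = n}
      = (S1 ∪ S2) ∪ S3 from hunion,
    Set.ncard_union_eq hd3 (fin1.union fin2) fin3,
    Set.ncard_union_eq hd12 fin1 fin2, hRB, hRmix]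
  rfl
end

section
/- For any integers r ≥ 2^{2l}−1 and m ≥ 2^{2l+1}−1 (with l ≥ 1), there exist sets A, B ⊆ ℕ with R_A = R_B, infinite symmetric difference, and A ∩ B equal to the infinite arithmetic progression r + m·ℕ. -/
/-!
Give the digit `i` the weight `2 ^ i` for `i < 2l`, `2 ^ (2l) - 1` for `i = 2l` and
`m * 2 ^ (i - 2l - 1)` for `i > 2l`, and let `S_ε` be the set of sums of weights over finite
digit sets `F` with `|F| ≡ ε (mod 2)`. Since `m` exceeds the sum of all weights up to `2l`, two
digit sets with the same sum agree above `2l`, and below they either agree or are `{2l}` and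
`{0, …, 2l - 1}`; those two have opposite parities. So a sum determines its digit set within a
parity class, and toggling, in both `F` and `G`, the least digit in which they differ is an
involution exchanging the representations `n = ∑_F + ∑_G` from `S_0` with those from `S_1`:
hence `R_{S_0} = R_{S_1}`. The coincidences give `S_0 ∩ S_1 = 2 ^ (2l) - 1 + mℕ`, whereas
`m * 2 ^ j ∈ S_1 \ S_0`. Translating both sets by `r - (2 ^ (2l) - 1)` gives the theorem.
-/

open Finset
open scoped symmDiff

lemma R_tr_add (t : ℕ) (S : Set ℕ) (n : ℕ) : R (tr t S) (2 * t + n) = R S n := by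
  have himage :
      {p : ℕ × ℕ | p.1 ∈ tr t S ∧ p.2 ∈ tr t S ∧ p.1 < p.2 ∧ p.1 + p.2 = 2 * t + n} =
        Prod.map (t + ·) (t + ·) ''
          {p | p.1 ∈ S ∧ p.2 ∈ S ∧ p.1 < p.2 ∧ p.1 + p.2 = n} := by
    ext ⟨x, y⟩
    constructor
    · rintro ⟨⟨a, ha, rfl⟩, ⟨b, hb, rfl⟩, hlt, hsum⟩
      exact ⟨(a, b), ⟨ha, hb, by simp_all, by simp_all; omega⟩, rfl⟩
    · rintro ⟨⟨a, b⟩, ⟨ha, hb, hlt, hsum⟩, he⟩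
      simp only [Prod.map, Prod.mk.injEq] at he hlt hsum
      obtain ⟨rfl, rfl⟩ := he
      exact ⟨⟨a, ha, rfl⟩, ⟨b, hb, rfl⟩, by simpa using hlt, by simp only; omega⟩
  rw [R, R, himage, Set.ncard_image_of_injective _
    ((add_right_injective t).prodMap (add_right_injective t))]

lemma R_tr_of_lt {t n : ℕ} (S : Set ℕ) (h : n < 2 * t) : R (tr t S) n = 0 := by
  rw [R]
  convert Set.ncard_empty (ℕ × ℕ)
  refine Set.eq_empty_of_forall_notMem ?_
  rintro ⟨x, y⟩ ⟨⟨a, -, rfl⟩, ⟨b, -, rfl⟩, -, hsum⟩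
  simp only at hsum
  omega

lemma R_tr_eq_R_tr {A B : Set ℕ} (h : R A = R B) (t : ℕ) : R (tr t A) = R (tr t B) := by
  funext n
  rcases le_or_gt (2 * t) n with hle | hlt
  · obtain ⟨n, rfl⟩ := Nat.exists_eq_add_of_le hle
    rw [R_tr_add, R_tr_add, h]
  · rw [R_tr_of_lt A hlt, R_tr_of_lt B hlt]

lemma symmDiff_singleton_of_mem {j : ℕ} {F : Finset ℕ} (h : j ∈ F) :
    F ∆ {j} = F.erase j := by
  ext i
  by_cases i = j <;> simp_all [mem_symmDiff]

lemma symmDiff_singleton_of_notMem {j : ℕ} {F : Finset ℕ} (h : j ∉ F) :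
    F ∆ {j} = insert j F := by
  ext i
  by_cases i = j <;> simp_all [mem_symmDiff]

lemma card_symmDiff_singleton_mod_two (j : ℕ) (F : Finset ℕ) :
    #(F ∆ {j}) % 2 = (#F + 1) % 2 := by
  by_cases h : j ∈ F
  · rw [symmDiff_singleton_of_mem h, ← card_erase_add_one h]
    omega
  · rw [symmDiff_singleton_of_notMem h, card_insert_of_notMem h]

lemma sum_symmDiff_singleton_add_sum_symmDiff_singleton {M : Type*} [AddCommMonoid M]
    (f : ℕ → M) {j : ℕ} {F G : Finset ℕ} (hj : j ∈ F ∆ G) :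
    ∑ i ∈ F ∆ {j}, f i + ∑ i ∈ G ∆ {j}, f i = ∑ i ∈ F, f i + ∑ i ∈ G, f i := by
  rcases mem_symmDiff.1 hj with ⟨hF, hG⟩ | ⟨hG, hF⟩
  · rw [symmDiff_singleton_of_mem hF, symmDiff_singleton_of_notMem hG, sum_insert hG,
      ← add_sum_erase F f hF]
    abel
  · rw [symmDiff_singleton_of_mem hG, symmDiff_singleton_of_notMem hF, sum_insert hF,
      ← add_sum_erase G f hG]
    abel

section ParitySplit

variable (w : ℕ → ℕ)

def paritySet (ε : ℕ) : Set ℕ := {x | ∃ F : Finset ℕ, #F % 2 = ε ∧ ∑ i ∈ F, w i = x}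

def ParityInjective : Prop :=
  ∀ ⦃F G : Finset ℕ⦄, #F % 2 = #G % 2 → ∑ i ∈ F, w i = ∑ i ∈ G, w i → F = G

def reprPairs (ε n : ℕ) : Set (Finset ℕ × Finset ℕ) :=
  {q | #q.1 % 2 = ε ∧ #q.2 % 2 = ε ∧ ∑ i ∈ q.1, w i < ∑ i ∈ q.2, w i ∧
    ∑ i ∈ q.1, w i + ∑ i ∈ q.2, w i = n}

variable {w} in
lemma R_paritySet (hw : ParityInjective w) (ε n : ℕ) :
    R (paritySet w ε) n = (reprPairs w ε n).ncard := by
  have himage :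
      {p : ℕ × ℕ | p.1 ∈ paritySet w ε ∧ p.2 ∈ paritySet w ε ∧ p.1 < p.2 ∧
        p.1 + p.2 = n} =
        (fun q : Finset ℕ × Finset ℕ => (∑ i ∈ q.1, w i, ∑ i ∈ q.2, w i)) ''
          reprPairs w ε n := by
    ext ⟨x, y⟩
    constructor
    · rintro ⟨⟨F, hF, rfl⟩, ⟨G, hG, rfl⟩, hlt, hsum⟩
      exact ⟨(F, G), ⟨hF, hG, hlt, hsum⟩, rfl⟩
    · rintro ⟨⟨F, G⟩, ⟨hF, hG, hlt, hsum⟩, he⟩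
      simp only [Prod.mk.injEq] at he
      obtain ⟨rfl, rfl⟩ := he
      exact ⟨⟨F, hF, rfl⟩, ⟨G, hG, rfl⟩, hlt, hsum⟩
  rw [R, himage, Set.InjOn.ncard_image]
  rintro ⟨F, G⟩ ⟨hF, hG, -⟩ ⟨F', G'⟩ ⟨hF', hG', -⟩ he
  simp only [Prod.mk.injEq] at he ⊢
  exact ⟨hw (hF.trans hF'.symm) he.1, hw (hG.trans hG'.symm) he.2⟩

lemma mem_paritySet_inter {F G : Finset ℕ} (h : ∑ i ∈ F, w i = ∑ i ∈ G, w i)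
    (hpar : #F % 2 ≠ #G % 2) : ∑ i ∈ F, w i ∈ paritySet w 0 ∩ paritySet w 1 := by
  rcases Nat.mod_two_eq_zero_or_one (#F) with hF | hF
  · exact ⟨⟨F, hF, rfl⟩, ⟨G, by omega, h.symm⟩⟩
  · exact ⟨⟨G, by omega, h.symm⟩, ⟨F, hF, rfl⟩⟩

def toggle (j : ℕ) (q : Finset ℕ × Finset ℕ) : Finset ℕ × Finset ℕ :=
  (q.1 ∆ {j}, q.2 ∆ {j})

noncomputable def firstDiff (q : Finset ℕ × Finset ℕ) : ℕ :=
  sInf (↑(q.1 ∆ q.2) : Set ℕ)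

def sortPair (q : Finset ℕ × Finset ℕ) : Finset ℕ × Finset ℕ :=
  if ∑ i ∈ q.1, w i ≤ ∑ i ∈ q.2, w i then q else q.swap

noncomputable def flipPair (q : Finset ℕ × Finset ℕ) : Finset ℕ × Finset ℕ :=
  sortPair w (toggle (firstDiff q) q)

lemma toggle_toggle (j : ℕ) (q : Finset ℕ × Finset ℕ) : toggle j (toggle j q) = q := by
  simp only [toggle, symmDiff_symmDiff_cancel_right]

lemma firstDiff_toggle (j : ℕ) (q : Finset ℕ × Finset ℕ) :
    firstDiff (toggle j q) = firstDiff q := by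
  rw [firstDiff, firstDiff, toggle, symmDiff_symmDiff_symmDiff_comm, symmDiff_self,
    symmDiff_bot]

lemma firstDiff_swap (q : Finset ℕ × Finset ℕ) : firstDiff q.swap = firstDiff q := by
  rw [firstDiff, firstDiff, Prod.fst_swap, Prod.snd_swap, symmDiff_comm q.2]

lemma firstDiff_mem {q : Finset ℕ × Finset ℕ} (h : q.1 ≠ q.2) :
    firstDiff q ∈ q.1 ∆ q.2 := by
  refine Nat.sInf_mem ?_
  rwa [coe_nonempty, nonempty_iff_ne_empty, Ne, ← bot_eq_empty, symmDiff_eq_bot]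

lemma flipPair_flipPair {q : Finset ℕ × Finset ℕ}
    (h : ∑ i ∈ q.1, w i < ∑ i ∈ q.2, w i) :
    flipPair w (flipPair w q) = q := by
  have horder : sortPair w q = q ∧ sortPair w q.swap = q := by
    simp only [sortPair, Prod.fst_swap, Prod.snd_swap, Prod.swap_swap, h.le, not_le.2 h,
      if_true, if_false, and_self]
  have hswap : ∀ j (p : Finset ℕ × Finset ℕ), toggle j p.swap = (toggle j p).swap :=
    fun _ _ => rfl
  unfold flipPair
  conv_lhs => arg 2; unfold sortPair
  split_ifs
  · rw [firstDiff_toggle, toggle_toggle, horder.1]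
  · rw [firstDiff_swap, firstDiff_toggle, ← hswap, toggle_toggle, horder.2]

variable {w} in
lemma flipPair_mapsTo (hw : ParityInjective w) {ε : ℕ} (hε : ε < 2) (n : ℕ) :
    Set.MapsTo (flipPair w) (reprPairs w ε n) (reprPairs w (1 - ε) n) := by
  rintro q ⟨hF, hG, hlt, hsum⟩
  have hj : firstDiff q ∈ q.1 ∆ q.2 := firstDiff_mem fun h => hlt.ne (by rw [h])
  rw [flipPair]
  generalize firstDiff q = j at hj ⊢
  have hF' : #(q.1 ∆ {j}) % 2 = 1 - ε := by rw [card_symmDiff_singleton_mod_two]; omega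
  have hG' : #(q.2 ∆ {j}) % 2 = 1 - ε := by rw [card_symmDiff_singleton_mod_two]; omega
  have hsum' := sum_symmDiff_singleton_add_sum_symmDiff_singleton w hj
  have hne : ∑ i ∈ q.1 ∆ {j}, w i ≠ ∑ i ∈ q.2 ∆ {j}, w i := by
    intro he
    have hFG : q.1 ∆ {j} = q.2 ∆ {j} := hw (hF'.trans hG'.symm) he
    rw [symmDiff_left_inj] at hFG
    exact hlt.ne (by rw [hFG])
  dsimp only [sortPair, toggle]
  split_ifs with hle
  · exact ⟨hF', hG', lt_of_le_of_ne hle hne, hsum'.trans hsum⟩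
  · exact ⟨hG', hF', not_le.1 hle, (add_comm _ _).trans (hsum'.trans hsum)⟩

variable {w} in
theorem R_paritySet_zero_eq_one (hw : ParityInjective w) :
    R (paritySet w 0) = R (paritySet w 1) := by
  funext n
  have hinv : Set.InvOn (flipPair w) (flipPair w) (reprPairs w 0 n) (reprPairs w 1 n) :=
    ⟨fun q hq => flipPair_flipPair w hq.2.2.1, fun q hq => flipPair_flipPair w hq.2.2.1⟩
  rw [R_paritySet hw, R_paritySet hw,
    (hinv.bijOn (flipPair_mapsTo hw two_pos n) (flipPair_mapsTo hw one_lt_two n)).ncard_eq]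

end ParitySplit

lemma sum_eq_sum_filter_lt_add_ite_add_sum_filter_gt {M : Type*} [AddCommMonoid M]
    (s : Finset ℕ) (n : ℕ) (f : ℕ → M) :
    ∑ i ∈ s, f i =
      ∑ i ∈ s with i < n, f i + (if n ∈ s then f n else 0) + ∑ i ∈ s with n < i, f i := by
  rw [sum_filter, sum_filter, ← sum_ite_eq' s n f, ← sum_add_distrib, ← sum_add_distrib]
  refine sum_congr rfl fun i _ => ?_
  rcases lt_trichotomy i n with h | rfl | h
  · simp [h, h.ne, h.not_gt]
  · simp
  · simp [h, h.ne', h.not_gt]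

lemma card_eq_card_filter_lt_add_ite_add_card_filter_gt (s : Finset ℕ) (n : ℕ) :
    #s = #{i ∈ s | i < n} + (if n ∈ s then 1 else 0) + #{i ∈ s | n < i} := by
  simpa only [← card_eq_sum_ones] using
    sum_eq_sum_filter_lt_add_ite_add_sum_filter_gt s n (fun _ => (1 : ℕ))

lemma eq_of_filter_lt_eq_of_filter_gt_eq {n : ℕ} {F G : Finset ℕ}
    (hlt : {i ∈ F | i < n} = {i ∈ G | i < n}) (hn : n ∈ F ↔ n ∈ G)
    (hgt : {i ∈ F | n < i} = {i ∈ G | n < i}) : F = G := by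
  ext i
  rcases lt_trichotomy i n with h | rfl | h
  · simpa [h] using congrArg (i ∈ ·) hlt
  · exact hn
  · simpa [h] using congrArg (i ∈ ·) hgt

lemma sum_two_pow_filter_lt_le (F : Finset ℕ) (n : ℕ) :
    ∑ i ∈ F with i < n, 2 ^ i ≤ 2 ^ n - 1 :=
  calc ∑ i ∈ F with i < n, 2 ^ i ≤ ∑ i ∈ range n, 2 ^ i :=
        sum_le_sum_of_subset fun i hi => mem_range.2 (mem_filter.1 hi).2
    _ = 2 ^ n - 1 := by simp [Nat.geomSum_eq le_rfl]

lemma filter_gt_eq_of_sum_two_pow_eq {n : ℕ} {F G : Finset ℕ}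
    (h : ∑ i ∈ F with n < i, 2 ^ (i - (n + 1)) = ∑ i ∈ G with n < i, 2 ^ (i - (n + 1))) :
    {i ∈ F | n < i} = {i ∈ G | n < i} := by
  have hshift : ∀ H : Finset ℕ,
      2 ^ (n + 1) * ∑ i ∈ H with n < i, 2 ^ (i - (n + 1)) = ∑ i ∈ H with n < i, 2 ^ i := by
    intro H
    rw [mul_sum]
    refine sum_congr rfl fun i hi => ?_
    rw [← pow_add, Nat.add_sub_cancel' (mem_filter.1 hi).2]
  exact geomSum_injective le_rfl (by simp only [← hshift, h])

lemma eq_and_eq_of_add_mul_eq {m a b a' b' : ℕ} (ha : a < m) (ha' : a' < m)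
    (h : a + m * b = a' + m * b') : a = a' ∧ b = b' := by
  have hmod := congrArg (· % m) h
  have hdiv := congrArg (· / m) h
  have hm : 0 < m := by omega
  simp only [Nat.add_mul_mod_self_left, Nat.mod_eq_of_lt ha, Nat.mod_eq_of_lt ha'] at hmod
  simp only [Nat.add_mul_div_left _ _ hm, Nat.div_eq_of_lt ha, Nat.div_eq_of_lt ha',
    zero_add] at hdiv
  exact ⟨hmod, hdiv⟩

section Construction

variable (l m : ℕ)

def weight (i : ℕ) : ℕ :=
  if i < 2 * l then 2 ^ i else if i = 2 * l then 2 ^ (2 * l) - 1 else m * 2 ^ (i - (2 * l + 1))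

lemma sum_weight (F : Finset ℕ) :
    ∑ i ∈ F, weight l m i = ∑ i ∈ F with i < 2 * l, (2 : ℕ) ^ i +
      (if 2 * l ∈ F then 2 ^ (2 * l) - 1 else 0) +
      m * ∑ i ∈ F with 2 * l < i, 2 ^ (i - (2 * l + 1)) := by
  have hlow : ∑ i ∈ F with i < 2 * l, weight l m i = ∑ i ∈ F with i < 2 * l, 2 ^ i :=
    sum_congr rfl fun i hi => if_pos (mem_filter.1 hi).2
  have hmid : weight l m (2 * l) = 2 ^ (2 * l) - 1 := by simp [weight]
  have hhigh : ∑ i ∈ F with 2 * l < i, weight l m i =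
      ∑ i ∈ F with 2 * l < i, m * 2 ^ (i - (2 * l + 1)) := by
    refine sum_congr rfl fun i hi => ?_
    have hi := (mem_filter.1 hi).2
    rw [weight, if_neg (by omega), if_neg (by omega)]
  rw [sum_eq_sum_filter_lt_add_ite_add_sum_filter_gt F (2 * l), hlow, hmid, hhigh, mul_sum]

variable {l m}

lemma sum_two_pow_filter_lt_add_ite_lt (hm : 2 ^ (2 * l + 1) - 1 ≤ m) (F : Finset ℕ) :
    ∑ i ∈ F with i < 2 * l, 2 ^ i + (if 2 * l ∈ F then 2 ^ (2 * l) - 1 else 0) < m := by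
  have hlow := sum_two_pow_filter_lt_le F (2 * l)
  have hpow : 2 ^ (2 * l + 1) = 2 * 2 ^ (2 * l) := pow_succ' 2 (2 * l)
  have hpos : 0 < 2 ^ (2 * l) := Nat.two_pow_pos _
  split <;> omega

lemma sum_filter_lt_eq_zero_and_card_mod_two_ne {F G : Finset ℕ}
    (hF : 2 * l ∈ F) (hG : 2 * l ∉ G)
    (hlow : ∑ i ∈ F with i < 2 * l, 2 ^ i + (2 ^ (2 * l) - 1) =
      ∑ i ∈ G with i < 2 * l, 2 ^ i)
    (hhigh : {i ∈ F | 2 * l < i} = {i ∈ G | 2 * l < i}) :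
    ∑ i ∈ F with i < 2 * l, 2 ^ i = 0 ∧ #F % 2 ≠ #G % 2 := by
  have hGle := sum_two_pow_filter_lt_le G (2 * l)
  have hFlow : {i ∈ F | i < 2 * l} = ∅ :=
    geomSum_injective le_rfl (by simp only [sum_empty]; omega)
  have hGlow : {i ∈ G | i < 2 * l} = range (2 * l) :=
    geomSum_injective le_rfl (by simp only [Nat.geomSum_eq le_rfl]; omega)
  refine ⟨by rw [hFlow, sum_empty], ?_⟩
  rw [card_eq_card_filter_lt_add_ite_add_card_filter_gt F (2 * l),
    card_eq_card_filter_lt_add_ite_add_card_filter_gt G (2 * l), hFlow, hGlow, hhigh,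
    if_pos hF, if_neg hG, card_empty, card_range]
  omega

lemma card_mod_two_ne_and_exists_of_sum_weight_eq {F G : Finset ℕ}
    (hm : 2 ^ (2 * l + 1) - 1 ≤ m)
    (h : ∑ i ∈ F, weight l m i = ∑ i ∈ G, weight l m i) (hne : F ≠ G) :
    #F % 2 ≠ #G % 2 ∧ ∃ k, ∑ i ∈ F, weight l m i = 2 ^ (2 * l) - 1 + k * m := by
  obtain ⟨hlow, hhigh⟩ := eq_and_eq_of_add_mul_eq (sum_two_pow_filter_lt_add_ite_lt hm F)
    (sum_two_pow_filter_lt_add_ite_lt hm G) (by rwa [← sum_weight, ← sum_weight])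
  replace hhigh := filter_gt_eq_of_sum_two_pow_eq hhigh
  have hvalue : ∀ H : Finset ℕ, ∑ i ∈ H with i < 2 * l, 2 ^ i = 0 → 2 * l ∈ H →
      ∃ k, ∑ i ∈ H, weight l m i = 2 ^ (2 * l) - 1 + k * m :=
    fun H h0 hH => ⟨_, by rw [sum_weight, h0, if_pos hH, zero_add, mul_comm m]⟩
  by_cases hF : 2 * l ∈ F <;> by_cases hG : 2 * l ∈ G
  · rw [if_pos hF, if_pos hG, add_left_inj] at hlow
    exact absurd (eq_of_filter_lt_eq_of_filter_gt_eq (geomSum_injective le_rfl hlow)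
      (iff_of_true hF hG) hhigh) hne
  · rw [if_pos hF, if_neg hG, add_zero] at hlow
    obtain ⟨h0, hpar⟩ := sum_filter_lt_eq_zero_and_card_mod_two_ne hF hG hlow hhigh
    exact ⟨hpar, hvalue F h0 hF⟩
  · rw [if_neg hF, if_pos hG, add_zero] at hlow
    obtain ⟨h0, hpar⟩ := sum_filter_lt_eq_zero_and_card_mod_two_ne hG hF hlow.symm hhigh.symm
    exact ⟨hpar.symm, h ▸ hvalue G h0 hG⟩
  · rw [if_neg hF, if_neg hG, add_zero, add_zero] at hlow
    exact absurd (eq_of_filter_lt_eq_of_filter_gt_eq (geomSum_injective le_rfl hlow)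
      (iff_of_false hF hG) hhigh) hne

theorem weight_parityInjective (hm : 2 ^ (2 * l + 1) - 1 ≤ m) :
    ParityInjective (weight l m) :=
  fun _ _ hpar h => by_contra fun hne =>
    (card_mod_two_ne_and_exists_of_sum_weight_eq hm h hne).1 hpar

variable (l) in
def highDigits (k : ℕ) : Finset ℕ := k.bitIndices.toFinset.map (addLeftEmbedding (2 * l + 1))

lemma lt_of_mem_highDigits {k i : ℕ} (hi : i ∈ highDigits l k) : 2 * l < i := by
  obtain ⟨j, -, rfl⟩ := mem_map.1 hi
  exact (Nat.lt_succ_self _).trans_le (Nat.le_add_right _ j)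

lemma sum_weight_highDigits (k : ℕ) : ∑ i ∈ highDigits l k, weight l m i = k * m := by
  conv_rhs => rw [← sum_toFinset_bitIndices_two_pow k, sum_mul]
  rw [highDigits, sum_map]
  refine sum_congr rfl fun i _ => ?_
  rw [addLeftEmbedding_apply, weight, if_neg (by omega), if_neg (by omega),
    Nat.add_sub_cancel_left, mul_comm]

lemma two_pow_sub_one_add_mul_mem_paritySet_inter (k : ℕ) :
    2 ^ (2 * l) - 1 + k * m ∈ paritySet (weight l m) 0 ∩ paritySet (weight l m) 1 := by
  have hmid : 2 * l ∉ highDigits l k := fun h => (lt_of_mem_highDigits h).ne rfl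
  have hdisj : Disjoint (range (2 * l)) (highDigits l k) :=
    disjoint_left.2 fun i hi h => (mem_range.1 hi).not_gt (lt_of_mem_highDigits h)
  have hF : ∑ i ∈ insert (2 * l) (highDigits l k), weight l m i = 2 ^ (2 * l) - 1 + k * m := by
    rw [sum_insert hmid, sum_weight_highDigits]
    simp [weight]
  have hG : ∑ i ∈ range (2 * l) ∪ highDigits l k, weight l m i = 2 ^ (2 * l) - 1 + k * m := by
    have hlow : ∑ i ∈ range (2 * l), weight l m i = ∑ i ∈ range (2 * l), 2 ^ i :=
      sum_congr rfl fun i hi => if_pos (mem_range.1 hi)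
    rw [sum_union hdisj, sum_weight_highDigits, hlow, Nat.geomSum_eq le_rfl, Nat.div_one]
  rw [← hF]
  refine mem_paritySet_inter _ (hF.trans hG.symm) ?_
  rw [card_insert_of_notMem hmid, card_union_of_disjoint hdisj, card_range]
  omega

theorem paritySet_inter (hm : 2 ^ (2 * l + 1) - 1 ≤ m) :
    paritySet (weight l m) 0 ∩ paritySet (weight l m) 1 =
      {x | ∃ k, x = 2 ^ (2 * l) - 1 + k * m} := by
  ext x
  constructor
  · rintro ⟨⟨F, hF, rfl⟩, ⟨G, hG, hGF⟩⟩
    have hne : F ≠ G := by rintro rfl; omega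
    exact (card_mod_two_ne_and_exists_of_sum_weight_eq hm hGF.symm hne).2
  · rintro ⟨k, rfl⟩
    exact two_pow_sub_one_add_mul_mem_paritySet_inter k

lemma mul_two_pow_mem_paritySet_one (j : ℕ) : m * 2 ^ j ∈ paritySet (weight l m) 1 := by
  refine ⟨{2 * l + 1 + j}, rfl, ?_⟩
  rw [sum_singleton, weight, if_neg (by omega), if_neg (by omega), Nat.add_sub_cancel_left]

theorem paritySet_symmDiff_infinite (hl : 1 ≤ l) (hm : 2 ^ (2 * l + 1) - 1 ≤ m) :
    (paritySet (weight l m) 0 ∆ paritySet (weight l m) 1).Infinite := by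
  have hpow : 2 ^ (2 * l + 1) = 2 * 2 ^ (2 * l) := pow_succ' 2 (2 * l)
  have hpow' : 2 ≤ 2 ^ (2 * l) := Nat.le_self_pow (by omega) 2
  refine Set.infinite_of_injective_forall_mem (f := fun j => m * 2 ^ j)
    (fun i j h => Nat.pow_right_injective le_rfl (Nat.eq_of_mul_eq_mul_left (by omega) h))
    fun j => Or.inr ⟨mul_two_pow_mem_paritySet_one j, fun h0 => ?_⟩
  obtain ⟨k, hk⟩ : m * 2 ^ j ∈ {x | ∃ k, x = 2 ^ (2 * l) - 1 + k * m} :=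
    paritySet_inter hm ▸ ⟨h0, mul_two_pow_mem_paritySet_one j⟩
  have hmod := congrArg (· % m) hk
  simp only [Nat.mul_mod_right, Nat.add_mul_mod_self_right,
    Nat.mod_eq_of_lt (show 2 ^ (2 * l) - 1 < m by omega)] at hmod
  omega

end Construction

lemma image_add_progression (t a m : ℕ) :
    (t + ·) '' {x | ∃ k, x = a + k * m} = {x | ∃ k, x = t + a + k * m} := by
  ext x
  constructor
  · rintro ⟨_, ⟨k, rfl⟩, rfl⟩
    exact ⟨k, by ring⟩
  · rintro ⟨k, rfl⟩
    exact ⟨a + k * m, ⟨k, rfl⟩, by ring⟩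

theorem stmt_17 (l r m : ℕ) (hl : 1 ≤ l)
    (hr : 2 ^ (2 * l) - 1 ≤ r) (hm : 2 ^ (2 * l + 1) - 1 ≤ m) :
    ∃ A B : Set ℕ, R A = R B ∧ (symmDiff A B).Infinite ∧
      A ∩ B = {x : ℕ | ∃ k : ℕ, x = r + k * m} := by
  set t := r - (2 ^ (2 * l) - 1)
  have ht : Function.Injective (t + ·) := add_right_injective t
  refine ⟨tr t (paritySet (weight l m) 0), tr t (paritySet (weight l m) 1),
    R_tr_eq_R_tr (R_paritySet_zero_eq_one (weight_parityInjective hm)) t, ?_, ?_⟩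
  · rw [tr, tr, ← Set.image_symmDiff ht]
    exact (paritySet_symmDiff_infinite hl hm).image ht.injOn
  · rw [tr, tr, ← Set.image_inter ht, paritySet_inter hm, image_add_progression,
      Nat.sub_add_cancel hr]
end

section
/- If A, B ⊆ ℕ are disjoint with A ∪ B = [0, m−1], R_A = R_B, A₁ = A ∪ (m+B), B₁ = B ∪ (m+A), then R_{A₁} = R_{B₁} and A₁, B₁ are disjoint with A₁ ∪ B₁ = [0, 2m−1]; i.e. partitions of initial intervals with equal representation functions propagate under the doubling construction. -/
lemma fin_of_sum {n : ℕ} {S : Set (ℕ × ℕ)} (h : ∀ p ∈ S, p.1 + p.2 ≤ n) :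
    S.Finite := by
  apply Set.Finite.subset (Set.finite_Iic ((n, n) : ℕ × ℕ))
  rintro ⟨a, b⟩ hp
  have := h _ hp
  simp only [Set.mem_Iic, Prod.le_def] at *
  omega

lemma R_tr (S : Set ℕ) (m n : ℕ) : R (tr m S) n = R S (n - 2 * m) := by
  unfold R
  have : {p : ℕ × ℕ | p.1 ∈ tr m S ∧ p.2 ∈ tr m S ∧ p.1 < p.2 ∧ p.1 + p.2 = n}
      = (fun q : ℕ × ℕ => (m + q.1, m + q.2)) ''
        {p : ℕ × ℕ | p.1 ∈ S ∧ p.2 ∈ S ∧ p.1 < p.2 ∧ p.1 + p.2 = n - 2 * m} := by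
    ext ⟨a, b⟩
    simp only [Set.mem_setOf_eq, tr, Set.mem_image, Prod.mk.injEq, Prod.exists]
    constructor
    · rintro ⟨⟨x, hx, rfl⟩, ⟨y, hy, rfl⟩, hlt, hsum⟩
      exact ⟨x, y, ⟨hx, hy, by omega, by omega⟩, rfl, rfl⟩
    · rintro ⟨x, y, ⟨hx, hy, hlt, hsum⟩, rfl, rfl⟩
      exact ⟨⟨x, hx, rfl⟩, ⟨y, hy, rfl⟩, by omega, by omega⟩
  rw [this, Set.ncard_image_of_injective]
  intro p q h
  simp only [Prod.mk.injEq] at h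
  ext <;> omega

lemma cross_tr (A B : Set ℕ) (m n : ℕ) :
    {q : ℕ × ℕ | q.1 ∈ A ∧ q.2 ∈ tr m B ∧ q.1 + q.2 = n}.ncard
      = {q : ℕ × ℕ | q.1 ∈ A ∧ q.2 ∈ B ∧ q.1 + q.2 + m = n}.ncard := by
  have : {q : ℕ × ℕ | q.1 ∈ A ∧ q.2 ∈ tr m B ∧ q.1 + q.2 = n}
      = (fun q : ℕ × ℕ => (q.1, m + q.2)) ''
        {q : ℕ × ℕ | q.1 ∈ A ∧ q.2 ∈ B ∧ q.1 + q.2 + m = n} := by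
    ext ⟨a, b⟩
    simp only [Set.mem_setOf_eq, tr, Set.mem_image, Prod.mk.injEq, Prod.exists]
    constructor
    · rintro ⟨ha, ⟨y, hy, rfl⟩, hsum⟩
      exact ⟨a, y, ⟨ha, hy, by omega⟩, rfl, rfl⟩
    · rintro ⟨x, y, ⟨hx, hy, hsum⟩, rfl, rfl⟩
      exact ⟨hx, ⟨y, hy, rfl⟩, by omega⟩
  rw [this, Set.ncard_image_of_injective]
  intro p q h
  simp only [Prod.mk.injEq] at h
  ext <;> omega

lemma cross_swap (A B : Set ℕ) (m n : ℕ) :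
    {q : ℕ × ℕ | q.1 ∈ A ∧ q.2 ∈ B ∧ q.1 + q.2 + m = n}.ncard
      = {q : ℕ × ℕ | q.1 ∈ B ∧ q.2 ∈ A ∧ q.1 + q.2 + m = n}.ncard := by
  have : {q : ℕ × ℕ | q.1 ∈ A ∧ q.2 ∈ B ∧ q.1 + q.2 + m = n}
      = Prod.swap '' {q : ℕ × ℕ | q.1 ∈ B ∧ q.2 ∈ A ∧ q.1 + q.2 + m = n} := by
    ext ⟨a, b⟩
    simp only [Set.mem_setOf_eq, Set.mem_image, Prod.exists, Prod.swap_prod_mk,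
      Prod.mk.injEq]
    constructor
    · rintro ⟨ha, hb, hsum⟩
      exact ⟨b, a, ⟨hb, ha, by omega⟩, rfl, rfl⟩
    · rintro ⟨x, y, ⟨hx, hy, hsum⟩, rfl, rfl⟩
      exact ⟨hy, hx, by omega⟩
  rw [this, Set.ncard_image_of_injective _ Prod.swap_injective]

lemma R_split (A T : Set ℕ) (m n : ℕ) (hA : ∀ a ∈ A, a < m) (hT : ∀ t ∈ T, m ≤ t) :
    R (A ∪ T) n = R A n + {q : ℕ × ℕ | q.1 ∈ A ∧ q.2 ∈ T ∧ q.1 + q.2 = n}.ncard + R T n := by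
  unfold R
  set PA := {p : ℕ × ℕ | p.1 ∈ A ∧ p.2 ∈ A ∧ p.1 < p.2 ∧ p.1 + p.2 = n} with hPA
  set PT := {p : ℕ × ℕ | p.1 ∈ T ∧ p.2 ∈ T ∧ p.1 < p.2 ∧ p.1 + p.2 = n} with hPT
  set C := {q : ℕ × ℕ | q.1 ∈ A ∧ q.2 ∈ T ∧ q.1 + q.2 = n} with hC
  have hset : {p : ℕ × ℕ | p.1 ∈ A ∪ T ∧ p.2 ∈ A ∪ T ∧ p.1 < p.2 ∧ p.1 + p.2 = n}
      = (PA ∪ C) ∪ PT := by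
    ext ⟨a, b⟩
    simp only [hPA, hPT, hC, Set.mem_setOf_eq, Set.mem_union]
    constructor
    · rintro ⟨ha | ha, hb | hb, hlt, hsum⟩
      · exact Or.inl (Or.inl ⟨ha, hb, hlt, hsum⟩)
      · exact Or.inl (Or.inr ⟨ha, hb, hsum⟩)
      · exact absurd (lt_of_lt_of_le (hA _ hb) (hT _ ha)) (by omega)
      · exact Or.inr ⟨ha, hb, hlt, hsum⟩
    · rintro ((⟨ha, hb, hlt, hsum⟩ | ⟨ha, hb, hsum⟩) | ⟨ha, hb, hlt, hsum⟩)
      · exact ⟨Or.inl ha, Or.inl hb, hlt, hsum⟩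
      · exact ⟨Or.inl ha, Or.inr hb, lt_of_lt_of_le (hA _ ha) (hT _ hb), hsum⟩
      · exact ⟨Or.inr ha, Or.inr hb, hlt, hsum⟩
  have finPA : PA.Finite := fin_of_sum (n := n) (fun p hp => le_of_eq hp.2.2.2)
  have finPT : PT.Finite := fin_of_sum (n := n) (fun p hp => le_of_eq hp.2.2.2)
  have finC : C.Finite := fin_of_sum (n := n) (fun p hp => le_of_eq hp.2.2)
  have d1 : Disjoint PA C := by
    rw [Set.disjoint_left]
    rintro ⟨a, b⟩ ⟨-, hb, -, -⟩ ⟨-, hb', -⟩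
    exact absurd (lt_of_lt_of_le (hA _ hb) (hT _ hb')) (by omega)
  have d2 : Disjoint (PA ∪ C) PT := by
    rw [Set.disjoint_left]
    rintro ⟨a, b⟩ hp ⟨ha', -, -⟩
    rcases hp with ⟨ha, -, -, -⟩ | ⟨ha, -, -⟩ <;>
      exact absurd (lt_of_lt_of_le (hA _ ha) (hT _ ha')) (by omega)
  rw [hset, Set.ncard_union_eq d2 (finPA.union finC) finPT,
    Set.ncard_union_eq d1 finPA finC]

theorem stmt_18 (A B : Set ℕ) (m : ℕ) (hm : 0 < m)
    (hI : Disjoint A B) (hU : A ∪ B = Set.Iio m) (hR : R A = R B) :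
    R (A ∪ tr m B) = R (B ∪ tr m A) ∧
      Disjoint (A ∪ tr m B) (B ∪ tr m A) ∧
      (A ∪ tr m B) ∪ (B ∪ tr m A) = Set.Iio (2 * m) := by
  have hA : ∀ a ∈ A, a < m := by
    intro a ha
    have : a ∈ Set.Iio m := hU ▸ Set.mem_union_left _ ha
    exact this
  have hB : ∀ b ∈ B, b < m := by
    intro b hb
    have : b ∈ Set.Iio m := hU ▸ Set.mem_union_right _ hb
    exact this
  have htrA : ∀ t ∈ tr m A, m ≤ t := by
    rintro t ⟨x, -, rfl⟩; exact Nat.le_add_right _ _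
  have htrB : ∀ t ∈ tr m B, m ≤ t := by
    rintro t ⟨x, -, rfl⟩; exact Nat.le_add_right _ _
  refine ⟨?_, ?_, ?_⟩
  · funext n
    rw [R_split A (tr m B) m n hA htrB, R_split B (tr m A) m n hB htrA,
      cross_tr, cross_tr, R_tr, R_tr, cross_swap, hR]
  · rw [Set.disjoint_left]
    rintro x (hx | hx) (hx' | hx')
    · exact Set.disjoint_left.mp hI hx hx'
    · exact absurd (lt_of_lt_of_le (hA _ hx) (htrA _ hx')) (by omega)
    · exact absurd (lt_of_lt_of_le (hB _ hx') (htrB _ hx)) (by omega)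
    · obtain ⟨a, ha, rfl⟩ := hx'
      obtain ⟨b, hb, hab⟩ := hx
      have hba : m + b = m + a := hab
      have : b = a := by omega
      exact Set.disjoint_left.mp hI ha (this ▸ hb)
  · ext x
    simp only [Set.mem_union, Set.mem_Iio, tr, Set.mem_image]
    constructor
    · rintro ((hx | ⟨b, hb, rfl⟩) | (hx | ⟨a, ha, rfl⟩))
      · have := hA _ hx; omega
      · have := hB _ hb; omega
      · have := hB _ hx; omega
      · have := hA _ ha; omega
    · intro hx
      by_cases h : x < m
      · have : x ∈ A ∪ B := hU ▸ Set.mem_Iio.mpr h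
        rcases this with h' | h'
        · exact Or.inl (Or.inl h')
        · exact Or.inr (Or.inl h')
      · have : x - m ∈ A ∪ B := by rw [hU]; simp; omega
        rcases this with h' | h'
        · exact Or.inr (Or.inr ⟨x - m, h', by omega⟩)
        · exact Or.inl (Or.inr ⟨x - m, h', by omega⟩)
end
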